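/- arXiv:1101.1816 — 4 statements merged into one kernel-verified Lean document; each statement's English description precedes it below -/
import Mathlib

section
/- For every integer n, every rooted tree T, and every vertex u of T at generation n, one has P(𝕋_n = T_n, ξ_n = u) = (∂M_n(T_n) / Z_n(T_n)) · GW(𝒯_n = T_n), where T_n denotes T truncated at generation n, Z_n(T_n) is the number of vertices of T at generation n, and ∂M_n(T_n) := e^{1/c_n} (Z_n(T_n)/φ'_n(φ_n^{−1}(s))) · φ_n^{−1}(s)^{Z_n(T_n)}. -/
open MeasureTheory Filter Set

noncomputable section

/-- A configuration assigns to each Ulam–Harris label (a finite word on `ℕ`)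
a number of children. A Galton–Watson tree is encoded by such a configuration. -/
abbrev Config : Type := List ℕ → ℕ

/-- `v` is a vertex of the tree encoded by the configuration `ω`:
every step of the path from the root is the index of a child of the previous vertex. -/
def memTree (ω : Config) (v : List ℕ) : Prop :=
  ∀ k, (h : k < v.length) → v.get ⟨k, h⟩ < ω (v.take k)

/-- `Z ω u k` is the number of descendants of the vertex `u` at height `|u| + k`
in the tree encoded by `ω`. -/
def Z (ω : Config) (u : List ℕ) (k : ℕ) : ℕ :=
  Nat.card {v : List ℕ // v.length = k ∧ memTree ω (u ++ v)}

/-- `GW` is the law of the Galton–Watson tree with offspring distribution `q`: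
under `GW` the numbers of children attached to the distinct labels
are i.i.d. with distribution `q`. -/
def IsGW (q : ℕ → ℝ) (GW : Measure Config) : Prop :=
  IsProbabilityMeasure GW ∧
    ∀ (S : Finset (List ℕ)) (g : List ℕ → ℕ),
      GW {ω | ∀ u ∈ S, ω u = g u} = ∏ u ∈ S, ENNReal.ofReal (q (g u))

/-- The probability generating function `φ_n(x) = E[x^{Z_n}]` of the population
at height `n` under the measure `GW`. -/
def pgf (GW : Measure Config) (n : ℕ) (x : ℝ) : ℝ :=
  ∫ ω, x ^ (Z ω [] n) ∂GW

/-- The vertex at height `n` of the ray whose successive child choices are given by `ξ`. -/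
def rayVertex (ξ : ℕ → ℕ) (n : ℕ) : List ℕ := List.ofFn (fun i : Fin n => ξ i)

/-- The generation at height `k` of the tree encoded by `t`. -/
def genSet (t : Config) (k : ℕ) : Set (List ℕ) := {v | v.length = k ∧ memTree t v}

/-- The offspring distribution `q̃_ℓ = q_ℓ e^{1/c_k} e^{-ℓ/c_{k+1}}` of a vertex of
generation `k` off the spine. -/
def tq (q : ℕ → ℝ) (c : ℕ → ℝ) (k ℓ : ℕ) : ℝ :=
  q ℓ * Real.exp (1 / c k) * Real.exp (-(ℓ : ℝ) / c (k + 1))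

/-- The offspring distribution
`q̃^s_ℓ = q_ℓ ℓ e^{-(ℓ-1)/c_{k+1}} φ'_k(φ_k^{-1}(s)) / φ'_{k+1}(φ_{k+1}^{-1}(s))`
of the spine vertex `ξ_k` at generation `k`. -/
def tqs (q : ℕ → ℝ) (c : ℕ → ℝ) (GW : Measure Config) (φinv : ℕ → ℝ → ℝ) (s : ℝ)
    (k ℓ : ℕ) : ℝ :=
  q ℓ * (ℓ : ℝ) * Real.exp (-((ℓ : ℝ) - 1) / c (k + 1)) *
    (deriv (pgf GW k) (φinv k s) / deriv (pgf GW (k + 1)) (φinv (k + 1) s))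

/-- `P` is the law of the marked tree `(𝕋, ξ)` of the spine construction:
conditionally on the first `k` generations `𝕋_k` and on the spine vertex `ξ_k`, the
numbers of children of the vertices at generation `k` are independent, the spine vertex
`ξ_k` having `ℓ` children with probability `tqs k ℓ`, every other vertex of generation `k`
having `ℓ` children with probability `tq k ℓ`, and `ξ_{k+1}` is chosen uniformly among the
children of `ξ_k`.  Equivalently, the probability that the tree agrees with `t` up to
generation `n` and that the spine makes the choices `u 0, …, u (n-1)` is the product below. -/
def IsSpineLaw (tq' tqs' : ℕ → ℕ → ℝ) (P : Measure (Config × (ℕ → ℕ))) : Prop :=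
  IsProbabilityMeasure P ∧
    ∀ (n : ℕ) (t : Config) (u : ℕ → ℕ), (∀ k < n, u k < t (rayVertex u k)) →
      P {p | (∀ v : List ℕ, v.length < n → memTree t v → p.1 v = t v) ∧
             (∀ k < n, p.2 k = u k)}
        = ∏ k ∈ Finset.range n,
            ENNReal.ofReal ((tqs' k (t (rayVertex u k)) / (t (rayVertex u k)))
              * ∏ᶠ v ∈ (genSet t k \ {rayVertex u k}), tq' k (t v))

/-!
Write `a_k = φ_k⁻¹(s)`. The choice `c_k = -1 / ln a_k` turns `e^{1/c_k}` into `a_k⁻¹` and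
`e^{-ℓ/c_{k+1}}` into `a_{k+1}^ℓ`. The spine law is a product over the generations `k < n`, and
since the children of generation `k` are exactly generation `k + 1`, the factor of generation `k`
is `W_{k+1} / W_k · ∏_{|v| = k} q(t v)` with `W_k = a_k^{Z_k - 1} / φ'_k(a_k) = ∂M_k / Z_k`.
The product telescopes to `W_n / W_0 = W_n`, and `∏_{k < n} ∏_{|v| = k} q(t v)` is
`GW(𝒯_n = T_n)`. The one analytic input is `φ'_k(a_k) > 0`: dominated convergence
differentiates `φ_k` under the integral, and a vanishing derivative would force `Z_k = 0` a.s.,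
making `φ_k` constant although it has a left inverse.
-/

theorem memTree_nil (t : Config) : memTree t [] := fun _ h => absurd h (Nat.not_lt_zero _)

theorem memTree_append_singleton {t : Config} {v : List ℕ} {j : ℕ} :
    memTree t (v ++ [j]) ↔ memTree t v ∧ j < t v := by
  simp only [memTree, List.length_append, List.length_singleton, List.get_eq_getElem]
  constructor
  · intro h
    refine ⟨fun k hk => ?_, ?_⟩
    · simpa [List.getElem_append_left hk, List.take_append_of_le_length hk.le] using
        h k (by omega)
    · simpa [List.take_append_of_le_length le_rfl] using h v.length (by omega)
  · rintro ⟨hv, hj⟩ k hk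
    rcases Nat.lt_or_ge k v.length with hkv | hkv
    · simpa [List.getElem_append_left hkv, List.take_append_of_le_length hkv.le] using hv k hkv
    · obtain rfl : k = v.length := by omega
      simpa [List.take_append_of_le_length le_rfl] using hj

theorem memTree.take {t : Config} {u : List ℕ} (h : memTree t u) (k : ℕ) :
    memTree t (u.take k) := by
  intro i hi
  simp only [List.length_take, lt_min_iff] at hi
  simpa [List.take_take, Nat.min_eq_left hi.1.le] using h i hi.2

def generation (t : Config) : ℕ → Finset (List ℕ)
  | 0 => {[]}
  | k + 1 => (generation t k).biUnion fun v => (Finset.range (t v)).image fun j => v ++ [j]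

theorem mem_generation {t : Config} {k : ℕ} {v : List ℕ} :
    v ∈ generation t k ↔ v.length = k ∧ memTree t v := by
  induction k generalizing v with
  | zero =>
    simp only [generation, Finset.mem_singleton]
    exact ⟨by rintro rfl; exact ⟨rfl, memTree_nil t⟩, fun h => List.length_eq_zero_iff.mp h.1⟩
  | succ k ih =>
    simp only [generation, Finset.mem_biUnion, Finset.mem_image, Finset.mem_range]
    constructor
    · rintro ⟨w, hw, j, hj, rfl⟩
      exact ⟨by simp [(ih.mp hw).1], memTree_append_singleton.mpr ⟨(ih.mp hw).2, hj⟩⟩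
    · rintro ⟨hlen, hmem⟩
      obtain ⟨w, j, rfl⟩ : ∃ w j, v = w ++ [j] := by
        rcases List.eq_nil_or_concat v with rfl | ⟨w, j, rfl⟩
        · simp at hlen
        · exact ⟨w, j, List.concat_eq_append⟩
      obtain ⟨hw, hj⟩ := memTree_append_singleton.mp hmem
      exact ⟨w, ih.mpr ⟨by simpa using hlen, hw⟩, j, hj, rfl⟩

theorem coe_generation (t : Config) (k : ℕ) : (generation t k : Set (List ℕ)) = genSet t k := by
  ext v
  simp [genSet, mem_generation]

theorem Z_nil_eq_card_generation (t : Config) (k : ℕ) : Z t [] k = (generation t k).card := by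
  rw [Z, ← Nat.card_eq_finsetCard]
  exact Nat.card_congr (Equiv.subtypeEquivRight fun v => by simp [mem_generation])

theorem card_generation_succ (t : Config) (k : ℕ) :
    (generation t (k + 1)).card = ∑ v ∈ generation t k, t v := by
  rw [generation, Finset.card_biUnion]
  · exact Finset.sum_congr rfl fun v _ => by
      rw [Finset.card_image_of_injective _ fun _ _ h => by simpa using h, Finset.card_range]
  · intro v hv w hw hvw
    simp only [Function.onFun, Finset.disjoint_left, Finset.mem_image]
    rintro _ ⟨j, -, rfl⟩ ⟨j', -, h⟩
    refine hvw (List.append_inj_left h.symm ?_)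
    rw [(mem_generation.mp hv).1, (mem_generation.mp hw).1]

theorem measurable_memTree (v : List ℕ) : Measurable fun ω : Config => memTree ω v := by
  unfold memTree
  fun_prop

theorem measurable_generation (k : ℕ) : Measurable fun ω : Config => generation ω k := by
  refine measurable_finset_iff.mpr fun v => ?_
  simp only [mem_generation]
  exact measurable_const.and (measurable_memTree v)

theorem measurable_Z_nil (k : ℕ) : Measurable fun ω : Config => Z ω [] k := by
  simp only [Z_nil_eq_card_generation]
  exact (measurable_of_countable Finset.card).comp (measurable_generation k)

section IntegralPow

variable {Ω : Type*} [MeasurableSpace Ω] {μ : Measure Ω} {N : Ω → ℕ}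

theorem exists_forall_natCast_mul_pow_pred_le {b : ℝ} (hb0 : 0 ≤ b) (hb1 : b < 1) :
    ∃ C, ∀ j : ℕ, (j : ℝ) * b ^ (j - 1) ≤ C := by
  obtain ⟨C, hC⟩ := (tendsto_self_mul_const_pow_of_lt_one hb0 hb1).bddAbove_range
  refine ⟨C + 1, fun j => ?_⟩
  have hC0 : 0 ≤ C := le_trans (by simp) (hC ⟨0, rfl⟩)
  rcases j with _ | i
  · simpa using hC0.trans (le_add_of_nonneg_right zero_le_one)
  · have hi : (i : ℝ) * b ^ i ≤ C := hC ⟨i, rfl⟩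
    have hbi : b ^ i ≤ 1 := pow_le_one₀ hb0 hb1.le
    rw [Nat.add_sub_cancel]
    push_cast
    linarith

theorem integrable_comp_of_abs_le [IsFiniteMeasure μ] (hN : Measurable N) {g : ℕ → ℝ} {C : ℝ}
    (hg : ∀ j, |g j| ≤ C) : Integrable (fun ω => g (N ω)) μ :=
  Integrable.of_bound ((measurable_of_countable g).comp hN).aestronglyMeasurable C
    (Eventually.of_forall fun ω => hg (N ω))

theorem hasDerivAt_integral_pow [IsFiniteMeasure μ] (hN : Measurable N) {y : ℝ} (hy : |y| < 1) :
    HasDerivAt (fun x => ∫ ω, x ^ N ω ∂μ) (∫ ω, (N ω : ℝ) * y ^ (N ω - 1) ∂μ) y := by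
  obtain ⟨C, hC⟩ :=
    exists_forall_natCast_mul_pow_pred_le (b := (1 + |y|) / 2) (by positivity) (by linarith)
  have hball : ∀ x ∈ Metric.ball y ((1 - |y|) / 2), |x| ≤ (1 + |y|) / 2 := fun x hx => by
    have := abs_sub_abs_le_abs_sub x y
    rw [Metric.mem_ball, Real.dist_eq] at hx
    linarith
  have hmeas (g : ℕ → ℝ) : AEStronglyMeasurable (fun ω => g (N ω)) μ :=
    ((measurable_of_countable g).comp hN).aestronglyMeasurable
  refine (hasDerivAt_integral_of_dominated_loc_of_deriv_le (bound := fun _ => C)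
    (F' := fun x ω => (N ω : ℝ) * x ^ (N ω - 1))
    (Metric.ball_mem_nhds y (show 0 < (1 - |y|) / 2 by linarith))
    (Eventually.of_forall fun x => hmeas (x ^ ·))
    (integrable_comp_of_abs_le hN (g := (y ^ ·)) (C := 1) fun j => ?_)
    (hmeas fun j => (j : ℝ) * y ^ (j - 1)) ?_ (integrable_const C)
    (Eventually.of_forall fun ω x _ => hasDerivAt_pow (N ω) x)).2
  · rw [abs_pow]
    exact pow_le_one₀ (abs_nonneg y) hy.le
  · refine Eventually.of_forall fun ω x hx => ?_
    rw [Real.norm_eq_abs, abs_mul, abs_pow, Nat.abs_cast (N ω)]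
    exact le_trans (by gcongr; exact hball x hx) (hC (N ω))

theorem deriv_integral_pow_pos [IsProbabilityMeasure μ] (hN : Measurable N)
    (hinj : InjOn (fun x : ℝ => ∫ ω, x ^ N ω ∂μ) (Ioo 0 1)) {y : ℝ} (hy : y ∈ Ioo 0 1) :
    0 < deriv (fun x => ∫ ω, x ^ N ω ∂μ) y := by
  have hy_abs : |y| < 1 := by rw [abs_of_pos hy.1]; exact hy.2
  rw [(hasDerivAt_integral_pow hN hy_abs).deriv]
  have hnonneg : 0 ≤ fun ω => (N ω : ℝ) * y ^ (N ω - 1) := fun ω => by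
    have := hy.1
    positivity
  refine (integral_nonneg hnonneg).lt_of_ne fun hzero => ?_
  obtain ⟨C, hC⟩ := exists_forall_natCast_mul_pow_pred_le hy.1.le hy.2
  have hint : Integrable (fun ω => (N ω : ℝ) * y ^ (N ω - 1)) μ :=
    integrable_comp_of_abs_le hN (g := fun j => (j : ℝ) * y ^ (j - 1)) fun j => by
      have := hy.1
      rw [abs_of_nonneg (by positivity)]
      exact hC j
  have hN0 : ∀ᵐ ω ∂μ, N ω = 0 := by
    filter_upwards [(integral_eq_zero_iff_of_nonneg hnonneg hint).mp hzero.symm] with ω hω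
    simpa [hy.1.ne'] using hω
  have hconst : ∀ x : ℝ, ∫ ω, x ^ N ω ∂μ = 1 := fun x => by
    rw [integral_congr_ae (g := fun _ => (1 : ℝ)) (by filter_upwards [hN0] with ω hω; simp [hω])]
    simp
  have h13 : (1 / 3 : ℝ) ∈ Ioo 0 1 := by norm_num
  have h12 : (1 / 2 : ℝ) ∈ Ioo 0 1 := by norm_num
  have := hinj h13 h12 (by simp only [hconst])
  norm_num at this

end IntegralPow

theorem deriv_pgf_pos {GW : Measure Config} [IsProbabilityMeasure GW] {n : ℕ}
    (hinj : InjOn (pgf GW n) (Ioo 0 1)) {y : ℝ} (hy : y ∈ Ioo 0 1) :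
    0 < deriv (pgf GW n) y :=
  deriv_integral_pow_pos (measurable_Z_nil n) hinj hy

theorem pgf_zero (GW : Measure Config) [IsProbabilityMeasure GW] : pgf GW 0 = id := by
  funext x
  simp [pgf, Z_nil_eq_card_generation, generation]

theorem rayVertex_getD_eq_take {u : List ℕ} {k : ℕ} (hk : k ≤ u.length) :
    rayVertex (u.getD · 0) k = u.take k :=
  List.ext_getElem (by simp [rayVertex]; omega) fun i hi _ => by
    simp only [rayVertex, List.length_ofFn] at hi
    simp [rayVertex, List.getElem?_eq_getElem (by omega : i < u.length)]

theorem rayVertex_eq_iff {ξ : ℕ → ℕ} {u : List ℕ} {n : ℕ} (hu : u.length = n) :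
    rayVertex ξ n = u ↔ ∀ k < n, ξ k = u.getD k 0 := by
  rw [List.ext_get_iff]
  simp only [rayVertex, List.length_ofFn, hu, List.get_eq_getElem, List.getElem_ofFn, true_and]
  constructor
  · intro h k hk
    rw [h k hk (by omega), List.getD_eq_getElem u 0 (by omega)]
  · intro h k hk _
    rw [h k hk, List.getD_eq_getElem u 0 (by omega)]

theorem exp_div_neg_one_div_log {a : ℝ} (ha : 0 < a) (x : ℝ) :
    Real.exp (x / (-1 / Real.log a)) = a ^ (-x) := by
  rw [Real.rpow_def_of_pos ha, div_div_eq_mul_div, div_neg, div_one]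
  ring_nf

theorem prod_range_div_of_ne_zero {K : Type*} [CommGroupWithZero K] {f : ℕ → K}
    (hf : ∀ k, f k ≠ 0) (n : ℕ) : ∏ k ∈ Finset.range n, f (k + 1) / f k = f n / f 0 := by
  induction n with
  | zero => simp [hf 0]
  | succ n ih =>
    rw [Finset.prod_range_succ, ih, div_mul_div_comm, mul_comm (f n),
      mul_div_mul_right _ _ (hf n)]

theorem mul_prod_erase_pow_div {α : Type*} [DecidableEq α] {G : Finset α} {w : α} (hw : w ∈ G)
    (f : α → ℕ) (g : α → ℝ) {a b : ℝ} (ha : a ≠ 0) :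
    g w * (b ^ f w / b) * ∏ v ∈ G.erase w, g v * b ^ f v / a
      = b ^ (∑ v ∈ G, f v) / b / (a ^ G.card / a) * ∏ v ∈ G, g v := by
  rw [← Finset.mul_prod_erase G g hw, ← Finset.add_sum_erase G f hw,
    ← Finset.card_erase_add_one hw]
  simp only [Finset.prod_div_distrib, Finset.prod_mul_distrib, Finset.prod_const,
    Finset.prod_pow_eq_pow_sum]
  field_simp
  ring

section SpineConstruction

variable {q c : ℕ → ℝ} {GW : Measure Config} {φinv : ℕ → ℝ → ℝ} {s : ℝ}

theorem tq_eq {a : ℕ → ℝ} (ha : ∀ k, 0 < a k) (hc : ∀ k, c k = -1 / Real.log (a k)) (k ℓ : ℕ) :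
    tq q c k ℓ = q ℓ * a (k + 1) ^ ℓ / a k := by
  rw [tq, hc, hc, exp_div_neg_one_div_log (ha k), exp_div_neg_one_div_log (ha (k + 1)), neg_neg,
    Real.rpow_neg_one, Real.rpow_natCast]
  ring

theorem tqs_div_eq (ha : ∀ k, 0 < φinv k s) (hc : ∀ k, c k = -1 / Real.log (φinv k s))
    {k ℓ : ℕ} (hℓ : ℓ ≠ 0) :
    tqs q c GW φinv s k ℓ / ℓ = q ℓ * (φinv (k + 1) s ^ ℓ / φinv (k + 1) s) *
      (deriv (pgf GW k) (φinv k s) / deriv (pgf GW (k + 1)) (φinv (k + 1) s)) := by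
  rw [tqs, hc, exp_div_neg_one_div_log (ha (k + 1)), neg_neg,
    Real.rpow_sub_one (ha (k + 1)).ne', Real.rpow_natCast]
  field_simp

/-- `∂M_k(t) / Z_k(t)`, the derivative martingale per individual of generation `k`. -/
def spineWeight (GW : Measure Config) (φinv : ℕ → ℝ → ℝ) (s : ℝ) (t : Config) (k : ℕ) : ℝ :=
  φinv k s ^ Z t [] k / φinv k s / deriv (pgf GW k) (φinv k s)

theorem spineWeight_zero [IsProbabilityMeasure GW] (t : Config) (ha : φinv 0 s ≠ 0) :
    spineWeight GW φinv s t 0 = 1 := by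
  simp [spineWeight, Z_nil_eq_card_generation, generation, pgf_zero, ha]

theorem spineWeight_pos (t : Config) {k : ℕ} (ha : 0 < φinv k s)
    (hD : 0 < deriv (pgf GW k) (φinv k s)) : 0 < spineWeight GW φinv s t k := by
  unfold spineWeight
  positivity

theorem spine_generation_factor_eq (ha : ∀ k, 0 < φinv k s)
    (hc : ∀ k, c k = -1 / Real.log (φinv k s))
    (hD : ∀ k, deriv (pgf GW k) (φinv k s) ≠ 0) {t : Config} {k : ℕ} {w : List ℕ}
    (hw : w ∈ generation t k) (hw_ne : t w ≠ 0) :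
    tqs q c GW φinv s k (t w) / t w * ∏ v ∈ (generation t k).erase w, tq q c k (t v)
      = spineWeight GW φinv s t (k + 1) / spineWeight GW φinv s t k *
          ∏ v ∈ generation t k, q (t v) := by
  simp only [tqs_div_eq ha hc hw_ne, tq_eq ha hc]
  rw [mul_right_comm, mul_prod_erase_pow_div hw t (fun v => q (t v)) (ha k).ne', spineWeight,
    spineWeight, Z_nil_eq_card_generation, Z_nil_eq_card_generation, card_generation_succ]
  have := hD k
  have := hD (k + 1)
  have := (ha k).ne'
  have := (ha (k + 1)).ne'
  field_simp

end SpineConstruction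

theorem IsSpineLaw.measure_eq_prod_generation {tq' tqs' : ℕ → ℕ → ℝ}
    {P : Measure (Config × (ℕ → ℕ))} (hP : IsSpineLaw tq' tqs' P) {n : ℕ} {t : Config}
    {u : List ℕ} (hu_len : u.length = n) (hu_mem : memTree t u) :
    P {p | (∀ v : List ℕ, v.length < n → memTree t v → p.1 v = t v) ∧ rayVertex p.2 n = u}
      = ∏ k ∈ Finset.range n, ENNReal.ofReal (tqs' k (t (u.take k)) / t (u.take k) *
          ∏ v ∈ (generation t k).erase (u.take k), tq' k (t v)) := by
  classical
  have hray (k : ℕ) (hk : k < n) : rayVertex (u.getD · 0) k = u.take k :=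
    rayVertex_getD_eq_take (by omega)
  have hchild (k : ℕ) (hk : k < n) : u.getD k 0 < t (rayVertex (u.getD · 0) k) := by
    rw [hray k hk, List.getD_eq_getElem u 0 (by omega)]
    exact hu_mem k (by omega)
  simp_rw [rayVertex_eq_iff hu_len]
  rw [hP.2 n t _ hchild]
  refine Finset.prod_congr rfl fun k hk => ?_
  rw [hray k (Finset.mem_range.mp hk), ← coe_generation, ← Finset.coe_singleton,
    ← Finset.coe_sdiff, finprod_mem_coe_finset, Finset.sdiff_singleton_eq_erase]

theorem IsGW.measure_eq_prod_generation {q : ℕ → ℝ} {GW : Measure Config} (hGW : IsGW q GW)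
    (hq : ∀ ℓ, 0 ≤ q ℓ) (n : ℕ) (t : Config) :
    GW {ω | ∀ v : List ℕ, v.length < n → memTree t v → ω v = t v}
      = ENNReal.ofReal (∏ k ∈ Finset.range n, ∏ v ∈ generation t k, q (t v)) := by
  classical
  have hdisj : (Finset.range n : Set ℕ).PairwiseDisjoint (generation t) :=
    fun i _ j _ hij => Finset.disjoint_left.mpr fun v hvi hvj =>
      hij ((mem_generation.mp hvi).1.symm.trans (mem_generation.mp hvj).1)
  have hcyl : {ω : Config | ∀ v : List ℕ, v.length < n → memTree t v → ω v = t v}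
      = {ω | ∀ v ∈ (Finset.range n).biUnion (generation t), ω v = t v} := by
    ext ω
    simp only [Finset.mem_biUnion, Finset.mem_range, mem_generation]
    exact ⟨fun h v ⟨k, hk, hlen, hv⟩ => h v (hlen ▸ hk) hv,
      fun h v hlen hv => h v ⟨v.length, hlen, rfl, hv⟩⟩
  rw [hcyl, hGW.2, Finset.prod_biUnion hdisj, ENNReal.ofReal_prod_of_nonneg fun k _ =>
    Finset.prod_nonneg fun v _ => hq (t v)]
  exact Finset.prod_congr rfl fun k _ =>
    (ENNReal.ofReal_prod_of_nonneg fun v _ => hq (t v)).symm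

theorem spine_marginal_eq_derivative_martingale_general
    (q : ℕ → ℝ) (hq_nonneg : ∀ ℓ, 0 ≤ q ℓ)
    (GW : Measure Config) (hGW : IsGW q GW)
    (s : ℝ) (hs : s ∈ Set.Ioo (0 : ℝ) 1)
    (φinv : ℕ → ℝ → ℝ)
    (hφinv : ∀ n, ∀ x ∈ Set.Ioo (0 : ℝ) 1,
      φinv n x ∈ Set.Ioo (0 : ℝ) 1 ∧ pgf GW n (φinv n x) = x)
    (hφinv_left : ∀ n, ∀ y ∈ Set.Ioo (0 : ℝ) 1, φinv n (pgf GW n y) = y)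
    (c : ℕ → ℝ) (hc : ∀ n, c n = -1 / Real.log (φinv n s))
    (P : Measure (Config × (ℕ → ℕ)))
    (hP : IsSpineLaw (tq q c) (tqs q c GW φinv s) P)
    (n : ℕ) (t : Config) (u : List ℕ) (hu_len : u.length = n) (hu_mem : memTree t u) :
    P {p | (∀ v : List ℕ, v.length < n → memTree t v → p.1 v = t v) ∧
           rayVertex p.2 n = u}
      = ENNReal.ofReal
          ((Real.exp (1 / c n) * (Z t [] n : ℝ) / deriv (pgf GW n) (φinv n s)
              * (φinv n s) ^ (Z t [] n)) / (Z t [] n))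
        * GW {ω | ∀ v : List ℕ, v.length < n → memTree t v → ω v = t v} := by
  have := hGW.1
  have ha (k : ℕ) : 0 < φinv k s := (hφinv k s hs).1.1
  have hD (k : ℕ) : 0 < deriv (pgf GW k) (φinv k s) :=
    deriv_pgf_pos (Set.LeftInvOn.injOn (f₁' := φinv k) (hφinv_left k)) (hφinv k s hs).1
  have hW (k : ℕ) : 0 < spineWeight GW φinv s t k := spineWeight_pos t (ha k) (hD k)
  have hspine (k : ℕ) (hk : k ≤ n) : u.take k ∈ generation t k :=
    mem_generation.mpr ⟨by rw [List.length_take, hu_len, min_eq_left hk], hu_mem.take k⟩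
  have hfactor (k : ℕ) (hk : k ∈ Finset.range n) :=
    spine_generation_factor_eq (q := q) ha hc (fun k => (hD k).ne')
      (hspine k (Finset.mem_range.mp hk).le)
      (Nat.ne_zero_of_lt (by simpa using hu_mem k (hu_len ▸ Finset.mem_range.mp hk)))
  have hZ : (Z t [] n : ℝ) ≠ 0 := by
    rw [Z_nil_eq_card_generation, Nat.cast_ne_zero]
    exact Finset.card_ne_zero_of_mem (hspine n le_rfl)
  have hweight : (Real.exp (1 / c n) * (Z t [] n : ℝ) / deriv (pgf GW n) (φinv n s)
      * (φinv n s) ^ (Z t [] n)) / (Z t [] n) = spineWeight GW φinv s t n := by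
    rw [hc n, exp_div_neg_one_div_log (ha n), Real.rpow_neg_one, spineWeight]
    field_simp
  rw [hP.measure_eq_prod_generation hu_len hu_mem,
    Finset.prod_congr rfl fun k hk => by rw [hfactor k hk],
    ← ENNReal.ofReal_prod_of_nonneg fun k _ => ?_, Finset.prod_mul_distrib,
    prod_range_div_of_ne_zero (fun k => (hW k).ne'), spineWeight_zero t (ha 0).ne', div_one,
    hGW.measure_eq_prod_generation hq_nonneg, hweight, ← ENNReal.ofReal_mul (hW n).le]
  · have := hW k
    have := hW (k + 1)
    have : 0 ≤ ∏ v ∈ generation t k, q (t v) := Finset.prod_nonneg fun v _ => hq_nonneg (t v)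
    positivity

/-- The fundamental identity of the spine decomposition: for every `n`, every tree `t` and
every vertex `u` of `t` at generation `n`,
`P(𝕋_n = T_n, ξ_n = u) = (∂M_n(T_n) / Z_n(T_n)) · GW(𝒯_n = T_n)`, where
`∂M_n = e^{1/c_n} (Z_n / φ'_n(φ_n^{-1}(s))) φ_n^{-1}(s)^{Z_n}` is the derivative
martingale and `Z_n(T_n)` is the number of vertices of `T` at generation `n`. -/
theorem spine_marginal_eq_derivative_martingale
    (q : ℕ → ℝ) (hq_nonneg : ∀ ℓ, 0 ≤ q ℓ) (hq_zero : q 0 = 0) (hq_sum : ∑' ℓ, q ℓ = 1)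
    (m : ℝ) (hm_def : m = ∑' ℓ : ℕ, (ℓ : ℝ) * q ℓ) (hm_one : 1 < m)
    (GW : Measure Config) (hGW : IsGW q GW)
    (s : ℝ) (hs : s ∈ Set.Ioo (0 : ℝ) 1)
    (φinv : ℕ → ℝ → ℝ)
    (hφinv : ∀ n, ∀ x ∈ Set.Ioo (0 : ℝ) 1,
      φinv n x ∈ Set.Ioo (0 : ℝ) 1 ∧ pgf GW n (φinv n x) = x)
    (hφinv_left : ∀ n, ∀ y ∈ Set.Ioo (0 : ℝ) 1, φinv n (pgf GW n y) = y)
    (c : ℕ → ℝ) (hc : ∀ n, c n = -1 / Real.log (φinv n s))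
    (P : Measure (Config × (ℕ → ℕ)))
    (hP : IsSpineLaw (tq q c) (tqs q c GW φinv s) P)
    (n : ℕ) (t : Config) (u : List ℕ) (hu_len : u.length = n) (hu_mem : memTree t u) :
    P {p | (∀ v : List ℕ, v.length < n → memTree t v → p.1 v = t v) ∧
           rayVertex p.2 n = u}
      = ENNReal.ofReal
          ((Real.exp (1 / c n) * (Z t [] n : ℝ) / deriv (pgf GW n) (φinv n s)
              * (φinv n s) ^ (Z t [] n)) / (Z t [] n))
        * GW {ω | ∀ v : List ℕ, v.length < n → memTree t v → ω v = t v} :=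
  spine_marginal_eq_derivative_martingale_general q hq_nonneg GW hGW s hs φinv hφinv hφinv_left c hc
    P hP n t u hu_len hu_mem

end
end

section
/- For every s ∈ (0,1), the ratio φ'_n(φ_n^{−1}(s)) / c_n converges as n → ∞ to a positive finite constant. -/
open MeasureTheory Filter Set

noncomputable section

open scoped ENNReal Topology

/-!
Put `F = genFun q` and `y n = φ_n⁻¹(s)`. Given the first `n` generations, the offspring numbers
of generation `n` are i.i.d. with law `q`; hence `φ_{n+1} = φ_n ∘ F`, so `φ_n = F^[n]` on
`[0, 1]` and `F (y (n + 1)) = y n`. By the chain rule the ratio is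
`R n = (∏ i < n, F' (y (i + 1))) * (-log (y n))`, and at `x = y (n + 1)`
`R (n + 1) / R n = F' x * (-log x) / (-log (F x))`.

This is at most `1` because `t ↦ -log (F t) + F' x * log t` decreases on `[x, 1]` (`F'`
increases and `F t ≤ t`), so `R n` converges to a positive limit once
`∑ (1 - R (n + 1) / R n) < ∞`. Up to a summable term, `1 - R (n + 1) / R n` is bounded by the
tangent defect `(1 - F x - F' x * (1 - x)) / (1 - x) = ∑ₖ q k * powRemainder k x / (1 - x)`,
and `powRemainder k x ≤ min 1 (k ^ 2 * (1 - x) ^ 2)`. Convexity of `F` makes `1 - y n` decay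
geometrically, hence `∑ₙ min (k * (1 - y n)) (k * (1 - y n))⁻¹ = O(k)` and the double sum is
bounded by a multiple of the mean `m`: no `x log x` moment is needed.
-/

section

open Finset

theorem min_self_inv_le_one (w : ℝ) : min w w⁻¹ ≤ 1 :=
  (le_total w 1).elim (min_le_left _ _).trans fun h =>
    (min_le_right _ _).trans (inv_le_one_of_one_le₀ h)

/-- While `w ≥ 1` the terms `w⁻¹` of the sum below grow geometrically, afterwards the terms `w`
decrease geometrically; the potential `θ / (θ - 1) * (min w⁻¹ 1 + (1 - min w 1))` bounds both
geometric sums at once. -/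
theorem min_inv_potential_step {θ a b : ℝ} (hθ : 1 < θ) (hb : 0 < b) (hba : θ * b ≤ a) :
    θ / (θ - 1) * (min a⁻¹ 1 + (1 - min a 1)) + min a a⁻¹ ≤
      θ / (θ - 1) * (min b⁻¹ 1 + (1 - min b 1)) := by
  have hθ1 : 0 < θ - 1 := by linarith
  have ha : 0 < a := by nlinarith
  have hθa : θ * (θ * b) ≤ θ * a := mul_le_mul_of_nonneg_left hba (by linarith)
  rcases le_or_gt 1 b with hb1 | hb1
  · have ha1 : 1 ≤ a := by nlinarith
    rw [min_eq_left (inv_le_one_of_one_le₀ ha1), min_eq_right ha1,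
      min_eq_right ((inv_le_one_of_one_le₀ ha1).trans ha1),
      min_eq_left (inv_le_one_of_one_le₀ hb1), min_eq_right hb1]
    field_simp
    nlinarith [mul_nonneg (sq_nonneg (θ - 1)) hb.le]
  rw [min_eq_right (one_le_inv₀ hb |>.2 hb1.le), min_eq_left hb1.le]
  rcases le_or_gt 1 a with ha1 | ha1
  · rw [min_eq_left (inv_le_one_of_one_le₀ ha1), min_eq_right ha1,
      min_eq_right ((inv_le_one_of_one_le₀ ha1).trans ha1)]
    field_simp
    rcases le_or_gt θ a with hθa' | hθa'
    · nlinarith [mul_le_mul_of_nonneg_left hθa' (by linarith : (0 : ℝ) ≤ θ), mul_pos ha hb]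
    · nlinarith [mul_nonneg (sub_nonneg.2 ha1) (by linarith : (0 : ℝ) ≤ 2 * θ - 1 - a),
        mul_pos ha hb]
  · rw [min_eq_right (one_le_inv₀ ha |>.2 ha1.le), min_eq_left ha1.le,
      min_eq_left (ha1.le.trans (one_le_inv₀ ha |>.2 ha1.le))]
    field_simp
    nlinarith

theorem sum_range_min_inv_le {θ : ℝ} (hθ : 1 < θ) {w : ℕ → ℝ} (hw : ∀ n, 0 < w n)
    (hdecay : ∀ n, θ * w (n + 1) ≤ w n) (N : ℕ) :
    ∑ n ∈ range N, min (w n) (w n)⁻¹ ≤ 2 * θ / (θ - 1) := by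
  have hθ1 : 0 < θ - 1 := by linarith
  have hbound : ∀ n, 0 ≤ min (w n)⁻¹ 1 + (1 - min (w n) 1) ∧
      min (w n)⁻¹ 1 + (1 - min (w n) 1) ≤ 2 := fun n => by
    constructor <;> linarith [min_le_right (w n)⁻¹ 1, min_le_right (w n) 1,
      lt_min (inv_pos.2 (hw n)) one_pos, lt_min (hw n) one_pos]
  have hpot : ∀ N, ∑ n ∈ range N, min (w n) (w n)⁻¹ ≤
      θ / (θ - 1) * (min (w N)⁻¹ 1 + (1 - min (w N) 1)) := by
    intro N
    induction N with
    | zero => simpa using mul_nonneg (by positivity) (hbound 0).1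
    | succ N ih =>
      rw [sum_range_succ]
      linarith [min_inv_potential_step hθ (hw _) (hdecay N)]
  calc _ ≤ θ / (θ - 1) * (min (w N)⁻¹ 1 + (1 - min (w N) 1)) := hpot N
    _ ≤ θ / (θ - 1) * 2 := by gcongr; exact (hbound N).2
    _ = 2 * θ / (θ - 1) := by ring

theorem summable_of_mul_succ_le {θ : ℝ} (hθ : 1 < θ) {ε : ℕ → ℝ} (hε : ∀ n, 0 ≤ ε n)
    (hdecay : ∀ n, θ * ε (n + 1) ≤ ε n) : Summable ε :=
  summable_of_ratio_norm_eventually_le (inv_lt_one_of_one_lt₀ hθ) (.of_forall fun n => by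
    rw [Real.norm_of_nonneg (hε _), Real.norm_of_nonneg (hε _), inv_mul_eq_div,
      le_div_iff₀ (by linarith), mul_comm]
    exact hdecay n)

theorem exists_pos_tendsto_of_summable_one_sub_div {R : ℕ → ℝ} (hR : ∀ n, 0 < R n)
    (hsum : Summable fun n => 1 - R (n + 1) / R n) : ∃ L, 0 < L ∧ Tendsto R atTop (𝓝 L) := by
  have hlog : Summable fun n => Real.log (R (n + 1) / R n) := by
    simpa using Real.summable_log_one_add_of_summable hsum.neg
  have htel : ∀ n, Real.log (R n) =
      Real.log (R 0) + ∑ i ∈ range n, Real.log (R (i + 1) / R i) := fun n => by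
    rw [sum_congr rfl fun i _ => Real.log_div (hR _).ne' (hR _).ne',
      sum_range_sub (fun i => Real.log (R i))]
    ring
  refine ⟨Real.exp (Real.log (R 0) + ∑' n, Real.log (R (n + 1) / R n)), Real.exp_pos _, ?_⟩
  refine ((Real.continuous_exp.tendsto _).comp
    ((hlog.hasSum.tendsto_sum_nat).const_add (Real.log (R 0)))).congr fun n => ?_
  simp [← htel, Real.exp_log (hR n)]

theorem hasDerivAt_iterate_of_orbit {f f' : ℝ → ℝ} {y : ℕ → ℝ}
    (hf : ∀ n, HasDerivAt f (f' (y (n + 1))) (y (n + 1))) (hy : ∀ n, f (y (n + 1)) = y n)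
    (n : ℕ) : HasDerivAt f^[n] (∏ i ∈ range n, f' (y (i + 1))) (y n) := by
  induction n with
  | zero => simpa using hasDerivAt_id (y 0)
  | succ n ih =>
    rw [Function.iterate_succ, prod_range_succ]
    exact (hy n ▸ ih).comp (y (n + 1)) (hf n)

end

namespace GaltonWatson

/-! ### Generating functions -/

def genFun (q : ℕ → ℝ) (x : ℝ) : ℝ := ∑' k, q k * x ^ k

def derivGenFun (q : ℕ → ℝ) (x : ℝ) : ℝ := ∑' k, q k * (k * x ^ (k - 1))

variable {q : ℕ → ℝ}

theorem norm_genFun_term_le (hq0 : ∀ k, 0 ≤ q k) {x : ℝ} (hx : |x| ≤ 1) (k : ℕ) :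
    ‖q k * x ^ k‖ ≤ q k := by
  rw [norm_mul, norm_pow, Real.norm_of_nonneg (hq0 k)]
  exact mul_le_of_le_one_right (hq0 k) (pow_le_one₀ (norm_nonneg x) hx)

theorem norm_derivGenFun_term_le (hq0 : ∀ k, 0 ≤ q k) {x : ℝ} (hx : |x| ≤ 1) (k : ℕ) :
    ‖q k * (k * x ^ (k - 1))‖ ≤ k * q k := by
  rw [norm_mul, norm_mul, norm_pow, Real.norm_of_nonneg (hq0 k), Real.norm_natCast, mul_comm]
  exact mul_le_mul_of_nonneg_right
    (mul_le_of_le_one_right k.cast_nonneg (pow_le_one₀ (norm_nonneg x) hx)) (hq0 k)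

theorem summable_genFun_term (hq0 : ∀ k, 0 ≤ q k) (hqs : Summable q) {x : ℝ} (hx : |x| ≤ 1) :
    Summable fun k => q k * x ^ k :=
  .of_norm_bounded hqs (norm_genFun_term_le hq0 hx)

theorem summable_derivGenFun_term (hq0 : ∀ k, 0 ≤ q k)
    (hms : Summable fun k : ℕ => k * q k) {x : ℝ} (hx : |x| ≤ 1) :
    Summable fun k => q k * (k * x ^ (k - 1)) :=
  .of_norm_bounded hms (norm_derivGenFun_term_le hq0 hx)

theorem hasDerivAt_genFun (hq0 : ∀ k, 0 ≤ q k) (hqs : Summable q)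
    (hms : Summable fun k : ℕ => k * q k) {x : ℝ} (hx : x ∈ Ioo (-1) 1) :
    HasDerivAt (genFun q) (derivGenFun q x) x :=
  hasDerivAt_tsum_of_isPreconnected hms isOpen_Ioo (convex_Ioo _ _).isPreconnected
    (fun k y _ => (hasDerivAt_pow k y).const_mul (q k))
    (fun k y hy => norm_derivGenFun_term_le hq0 (abs_le.2 ⟨hy.1.le, hy.2.le⟩) k)
    (y₀ := 0) (by norm_num) (summable_genFun_term hq0 hqs (by norm_num)) hx

theorem continuousOn_genFun (hq0 : ∀ k, 0 ≤ q k) (hqs : Summable q) :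
    ContinuousOn (genFun q) (Icc (-1) 1) :=
  continuousOn_tsum (fun k => (continuous_const.mul (continuous_pow k)).continuousOn) hqs
    fun k _ hx => norm_genFun_term_le hq0 (abs_le.2 hx) k

theorem genFun_one (hq1 : ∑' k, q k = 1) : genFun q 1 = 1 := by
  simp [genFun, hq1]

theorem genFun_nonneg (hq0 : ∀ k, 0 ≤ q k) {x : ℝ} (hx : 0 ≤ x) : 0 ≤ genFun q x :=
  tsum_nonneg fun k => mul_nonneg (hq0 k) (pow_nonneg hx k)

theorem genFun_mem_Icc (hq0 : ∀ k, 0 ≤ q k) (hqs : Summable q) (hq1 : ∑' k, q k = 1) {x : ℝ}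
    (hx : x ∈ Icc 0 1) : genFun q x ∈ Icc 0 1 :=
  ⟨genFun_nonneg hq0 hx.1, hq1 ▸ Summable.tsum_le_tsum
    (fun k => mul_le_of_le_one_right (hq0 k) (pow_le_one₀ hx.1 hx.2))
    (summable_genFun_term hq0 hqs (abs_le.2 ⟨by linarith [hx.1], hx.2⟩)) hqs⟩

theorem genFun_pos (hq0 : ∀ k, 0 ≤ q k) (hqs : Summable q) {K : ℕ} (hqK : 0 < q K)
    {x : ℝ} (hx0 : 0 < x) (hx1 : x ≤ 1) : 0 < genFun q x :=
  (summable_genFun_term hq0 hqs (abs_le.2 ⟨by linarith, hx1⟩)).tsum_pos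
    (fun k => mul_nonneg (hq0 k) (pow_nonneg hx0.le k)) K (mul_pos hqK (pow_pos hx0 K))

theorem genFun_lt_self (hq0 : ∀ k, 0 ≤ q k) (hqz : q 0 = 0) (hqs : Summable q)
    (hq1 : ∑' k, q k = 1) {K : ℕ} (hK : 2 ≤ K) (hqK : 0 < q K) {x : ℝ} (hx : x ∈ Ioo 0 1) :
    genFun q x < x := by
  have hgap : x - genFun q x = ∑' k, q k * (x - x ^ k) := by
    simp only [mul_sub]
    rw [Summable.tsum_sub (hqs.mul_right x)
      (summable_genFun_term hq0 hqs (abs_le.2 ⟨by linarith [hx.1], hx.2.le⟩)),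
      tsum_mul_right, hq1, one_mul, genFun]
  have hterm : ∀ k, 0 ≤ q k * (x - x ^ k) := fun k => by
    rcases k with _ | k
    · simp [hqz]
    · exact mul_nonneg (hq0 _) (sub_nonneg.2 (pow_le_of_le_one hx.1.le hx.2.le k.succ_ne_zero))
  have hsum : Summable fun k => q k * (x - x ^ k) :=
    .of_nonneg_of_le hterm (fun k => mul_le_of_le_one_right (hq0 k) (by
      linarith [pow_nonneg hx.1.le k, hx.2])) hqs
  have hK : 0 < q K * (x - x ^ K) :=
    mul_pos hqK (sub_pos.2 (pow_lt_self_of_lt_one₀ hx.1 hx.2 (by omega)))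
  linarith [hsum.tsum_pos hterm K hK]

theorem derivGenFun_nonneg (hq0 : ∀ k, 0 ≤ q k) {x : ℝ} (hx : 0 ≤ x) : 0 ≤ derivGenFun q x :=
  tsum_nonneg fun k => mul_nonneg (hq0 k) (mul_nonneg k.cast_nonneg (pow_nonneg hx _))

theorem derivGenFun_pos (hq0 : ∀ k, 0 ≤ q k) (hms : Summable fun k : ℕ => k * q k) {K : ℕ}
    (hK : 1 ≤ K) (hqK : 0 < q K) {x : ℝ} (hx0 : 0 < x) (hx1 : x ≤ 1) : 0 < derivGenFun q x :=
  (summable_derivGenFun_term hq0 hms (abs_le.2 ⟨by linarith, hx1⟩)).tsum_pos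
    (fun k => mul_nonneg (hq0 k) (mul_nonneg k.cast_nonneg (pow_nonneg hx0.le _))) K
    (mul_pos hqK (mul_pos (by exact_mod_cast hK) (pow_pos hx0 _)))

theorem derivGenFun_monotoneOn (hq0 : ∀ k, 0 ≤ q k) (hms : Summable fun k : ℕ => k * q k) :
    MonotoneOn (derivGenFun q) (Icc 0 1) := fun x hx y hy hxy =>
  Summable.tsum_le_tsum
    (fun k => mul_le_mul_of_nonneg_left (mul_le_mul_of_nonneg_left
      (pow_le_pow_left₀ hx.1 hxy _) k.cast_nonneg) (hq0 k))
    (summable_derivGenFun_term hq0 hms (abs_le.2 ⟨by linarith [hx.1], hx.2⟩))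
    (summable_derivGenFun_term hq0 hms (abs_le.2 ⟨by linarith [hy.1], hy.2⟩))

theorem convexOn_genFun (hq0 : ∀ k, 0 ≤ q k) (hqs : Summable q)
    (hms : Summable fun k : ℕ => k * q k) : ConvexOn ℝ (Icc 0 1) (genFun q) := by
  have hderiv : ∀ x ∈ interior (Icc (0 : ℝ) 1), HasDerivAt (genFun q) (derivGenFun q x) x :=
    fun x hx => by
      rw [interior_Icc] at hx
      exact hasDerivAt_genFun hq0 hqs hms ⟨by linarith [hx.1], hx.2⟩
  refine MonotoneOn.convexOn_of_deriv (convex_Icc 0 1)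
    ((continuousOn_genFun hq0 hqs).mono (Icc_subset_Icc (by norm_num) le_rfl))
    (fun x hx => (hderiv x hx).differentiableAt.differentiableWithinAt) ?_
  intro x hx y hy hxy
  rw [(hderiv x hx).deriv, (hderiv y hy).deriv]
  exact derivGenFun_monotoneOn hq0 hms (interior_subset hx) (interior_subset hy) hxy

theorem one_sub_genFun_div_le (hq0 : ∀ k, 0 ≤ q k) (hqs : Summable q) (hq1 : ∑' k, q k = 1)
    (hms : Summable fun k : ℕ => k * q k) {x y : ℝ} (hx : 0 ≤ x) (hxy : x ≤ y) (hy : y < 1) :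
    (1 - genFun q x) / (1 - x) ≤ (1 - genFun q y) / (1 - y) := by
  have h := (convexOn_genFun hq0 hqs hms).secant_mono (a := 1) ⟨zero_le_one, le_rfl⟩
    ⟨hx, by linarith⟩ ⟨by linarith, hy.le⟩ (by linarith) hy.ne hxy
  rwa [genFun_one hq1, ← neg_div_neg_eq, neg_sub, neg_sub, ← neg_div_neg_eq (_ - 1),
    neg_sub, neg_sub] at h

/-- The error of the tangent line of `t ↦ t ^ k` at `1`. -/
def powRemainder (k : ℕ) (t : ℝ) : ℝ := 1 - t ^ k - k * t ^ (k - 1) * (1 - t)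

theorem powRemainder_succ (k : ℕ) (t : ℝ) :
    powRemainder (k + 1) t = powRemainder k t + k * t ^ (k - 1) * (1 - t) ^ 2 := by
  rcases k with _ | k
  · simp [powRemainder]
  · simp only [powRemainder, Nat.add_sub_cancel]
    push_cast
    ring

theorem powRemainder_nonneg (k : ℕ) {t : ℝ} (ht : t ∈ Icc 0 1) : 0 ≤ powRemainder k t := by
  induction k with
  | zero => simp [powRemainder]
  | succ k ih =>
    rw [powRemainder_succ]
    have := pow_nonneg ht.1 (k - 1)
    positivity

theorem powRemainder_le_sq (k : ℕ) {t : ℝ} (ht : t ∈ Icc 0 1) :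
    powRemainder k t ≤ k ^ 2 * (1 - t) ^ 2 := by
  induction k with
  | zero => simp [powRemainder]
  | succ k ih =>
    have : (k : ℝ) * t ^ (k - 1) * (1 - t) ^ 2 ≤ k * (1 - t) ^ 2 :=
      mul_le_mul_of_nonneg_right (mul_le_of_le_one_right k.cast_nonneg
        (pow_le_one₀ ht.1 ht.2)) (sq_nonneg _)
    rw [powRemainder_succ]
    push_cast
    nlinarith [sq_nonneg (1 - t)]

theorem powRemainder_le_one (k : ℕ) {t : ℝ} (ht : t ∈ Icc 0 1) : powRemainder k t ≤ 1 := by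
  have : 0 ≤ (k : ℝ) * t ^ (k - 1) * (1 - t) := by
    have := pow_nonneg ht.1 (k - 1); have := ht.2; positivity
  rw [powRemainder]
  linarith [pow_nonneg ht.1 k]

theorem powRemainder_div_le (k : ℕ) {t : ℝ} (ht : t ∈ Ico 0 1) :
    powRemainder k t / (1 - t) ≤ k * min (k * (1 - t)) (k * (1 - t))⁻¹ := by
  have ht' : t ∈ Icc 0 1 := Ico_subset_Icc_self ht
  have hε : 0 < 1 - t := sub_pos.2 ht.2
  rcases k.eq_zero_or_pos with rfl | hk
  · simp [powRemainder]
  have hk : (0 : ℝ) < k := by exact_mod_cast hk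
  rw [div_le_iff₀ hε, mul_min_of_nonneg _ _ hk.le, min_mul_of_nonneg _ _ hε.le]
  refine le_min ?_ ?_
  · calc powRemainder k t ≤ k ^ 2 * (1 - t) ^ 2 := powRemainder_le_sq k ht'
      _ = k * (k * (1 - t)) * (1 - t) := by ring
  · calc powRemainder k t ≤ 1 := powRemainder_le_one k ht'
      _ = k * (k * (1 - t))⁻¹ * (1 - t) := by field_simp

theorem one_sub_genFun_sub_eq_tsum (hq0 : ∀ k, 0 ≤ q k) (hqs : Summable q)
    (hq1 : ∑' k, q k = 1) (hms : Summable fun k : ℕ => k * q k) {x : ℝ} (hx : |x| ≤ 1) :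
    1 - genFun q x - derivGenFun q x * (1 - x) = ∑' k, q k * powRemainder k x := by
  have hterm := summable_genFun_term hq0 hqs hx
  calc 1 - genFun q x - derivGenFun q x * (1 - x)
      = ∑' k, q k - ∑' k, q k * x ^ k - ∑' k, q k * (k * x ^ (k - 1)) * (1 - x) := by
        rw [hq1, genFun, derivGenFun, tsum_mul_right]
    _ = ∑' k, q k * powRemainder k x := by
        rw [← Summable.tsum_sub hqs hterm, ← Summable.tsum_sub (hqs.sub hterm)
          ((summable_derivGenFun_term hq0 hms hx).mul_right _)]
        exact tsum_congr fun k => by simp only [powRemainder]; ring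

theorem one_sub_genFun_sub_div_le (hq0 : ∀ k, 0 ≤ q k) (hqs : Summable q)
    (hq1 : ∑' k, q k = 1) (hms : Summable fun k : ℕ => k * q k) {x : ℝ} (hx : x ∈ Ico 0 1) :
    (1 - genFun q x - derivGenFun q x * (1 - x)) / (1 - x) ≤
      ∑' k, q k * (k * min (k * (1 - x)) (k * (1 - x))⁻¹) := by
  have hx' : x ∈ Icc 0 1 := Ico_subset_Icc_self hx
  rw [one_sub_genFun_sub_eq_tsum hq0 hqs hq1 hms (abs_le.2 ⟨by linarith [hx.1], hx'.2⟩),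
    ← tsum_div_const]
  refine Summable.tsum_le_tsum (fun k => ?_) ?_ ?_
  · rw [mul_div_assoc]
    exact mul_le_mul_of_nonneg_left (powRemainder_div_le k hx) (hq0 k)
  · refine Summable.div_const (.of_nonneg_of_le (fun k => ?_) (fun k => ?_) hqs) _
    · exact mul_nonneg (hq0 k) (powRemainder_nonneg k hx')
    · exact mul_le_of_le_one_right (hq0 k) (powRemainder_le_one k hx')
  · have hw : ∀ k : ℕ, 0 ≤ (k : ℝ) * (1 - x) := fun k =>
      mul_nonneg k.cast_nonneg (by linarith [hx.2])
    refine .of_nonneg_of_le (fun k => ?_) (fun k => ?_) hms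
    · exact mul_nonneg (hq0 k) (mul_nonneg k.cast_nonneg (le_min (hw k) (inv_nonneg.2 (hw k))))
    · calc _ = k * q k * min (k * (1 - x)) (k * (1 - x))⁻¹ := by ring
        _ ≤ k * q k := mul_le_of_le_one_right (mul_nonneg k.cast_nonneg (hq0 k))
          (min_self_inv_le_one _)

theorem summable_tsum_mul_min_inv (hq0 : ∀ k, 0 ≤ q k) (hms : Summable fun k : ℕ => k * q k)
    {θ : ℝ} (hθ : 1 < θ) {ε : ℕ → ℝ} (hε : ∀ n, 0 < ε n) (hdecay : ∀ n, θ * ε (n + 1) ≤ ε n) :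
    Summable fun n => ∑' k, q k * (k * min (k * ε n) (k * ε n)⁻¹) := by
  set f : ℕ × ℕ → ℝ := fun p => q p.1 * (p.1 * min (p.1 * ε p.2) (p.1 * ε p.2)⁻¹)
  have hf0 : 0 ≤ f := fun p => by
    have := hq0 p.1
    have := hε p.2
    simp only [f, Pi.zero_apply]
    positivity
  have hrow : ∀ k N, ∑ n ∈ Finset.range N, f (k, n) ≤ 2 * θ / (θ - 1) * (k * q k) := by
    intro k N
    rcases k.eq_zero_or_pos with rfl | hk
    · simp [f]
    have hk : (0 : ℝ) < k := by exact_mod_cast hk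
    have := sum_range_min_inv_le hθ (w := fun n => k * ε n) (fun n => mul_pos hk (hε n))
      (fun n => by rw [mul_left_comm]; exact mul_le_mul_of_nonneg_left (hdecay n) hk.le) N
    simp only [f, ← Finset.mul_sum]
    calc _ = k * q k * ∑ n ∈ Finset.range N, min (k * ε n) (k * ε n)⁻¹ := by ring
      _ ≤ k * q k * (2 * θ / (θ - 1)) :=
        mul_le_mul_of_nonneg_left this (mul_nonneg hk.le (hq0 k))
      _ = _ := by ring
  have hrow_summable : ∀ k, Summable fun n => f (k, n) := fun k =>
    summable_of_sum_range_le (fun n => hf0 _) (hrow k)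
  have hf : Summable f := (summable_prod_of_nonneg hf0).2 ⟨hrow_summable,
    .of_nonneg_of_le (fun k => tsum_nonneg fun n => hf0 _)
      (fun k => (hrow_summable k).tsum_le_of_sum_range_le (hrow k))
      (hms.mul_left (2 * θ / (θ - 1)))⟩
  exact hf.prod_symm.prod

/-! ### Supercritical laws and backward orbits -/

structure IsSupercriticalWithoutDeath (q : ℕ → ℝ) : Prop where
  nonneg : ∀ k, 0 ≤ q k
  zero : q 0 = 0
  summable : Summable q
  tsum_eq_one : ∑' k, q k = 1
  summable_mean : Summable fun k : ℕ => k * q k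
  one_lt_mean : 1 < ∑' k : ℕ, k * q k

namespace IsSupercriticalWithoutDeath

theorem of_tsum (hq0 : ∀ k, 0 ≤ q k) (hqz : q 0 = 0) (hq1 : ∑' k, q k = 1)
    (hm : 1 < ∑' k : ℕ, k * q k) : IsSupercriticalWithoutDeath q where
  nonneg := hq0
  zero := hqz
  summable := by
    by_contra h
    simp [tsum_eq_zero_of_not_summable h] at hq1
  tsum_eq_one := hq1
  summable_mean := by
    by_contra h
    rw [tsum_eq_zero_of_not_summable h] at hm
    linarith
  one_lt_mean := hm

theorem exists_two_le_pos (hq : IsSupercriticalWithoutDeath q) : ∃ K, 2 ≤ K ∧ 0 < q K := by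
  by_contra! h
  have hmean : ∑' k : ℕ, (k : ℝ) * q k = q 1 := by
    rw [tsum_eq_single 1 fun k hk => ?_, Nat.cast_one, one_mul]
    rcases k with _ | _ | k
    · simp
    · exact absurd rfl hk
    · simp [le_antisymm (h (k + 2) (by omega)) (hq.nonneg _)]
  have : q 1 ≤ ∑' k, q k := hq.summable.le_tsum 1 fun k _ => hq.nonneg k
  linarith [hq.one_lt_mean, hq.tsum_eq_one]

theorem genFun_lt_self (hq : IsSupercriticalWithoutDeath q) {x : ℝ} (hx : x ∈ Ioo 0 1) :
    genFun q x < x :=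
  have ⟨_, hK, hqK⟩ := hq.exists_two_le_pos
  GaltonWatson.genFun_lt_self hq.nonneg hq.zero hq.summable hq.tsum_eq_one hK hqK hx

theorem genFun_mem_Ioo (hq : IsSupercriticalWithoutDeath q) {x : ℝ} (hx : x ∈ Ioo 0 1) :
    genFun q x ∈ Ioo 0 1 :=
  have ⟨_, _, hqK⟩ := hq.exists_two_le_pos
  ⟨genFun_pos hq.nonneg hq.summable hqK hx.1 hx.2.le, (hq.genFun_lt_self hx).trans hx.2⟩

theorem derivGenFun_pos (hq : IsSupercriticalWithoutDeath q) {x : ℝ} (hx : x ∈ Ioo 0 1) :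
    0 < derivGenFun q x :=
  have ⟨_, hK, hqK⟩ := hq.exists_two_le_pos
  GaltonWatson.derivGenFun_pos hq.nonneg hq.summable_mean (by omega) hqK hx.1 hx.2.le

theorem derivGenFun_mul_neg_log_le (hq : IsSupercriticalWithoutDeath q) {x : ℝ}
    (hx : x ∈ Ioo 0 1) : derivGenFun q x * -Real.log x ≤ -Real.log (genFun q x) := by
  obtain ⟨K, -, hqK⟩ := hq.exists_two_le_pos
  have hpos : ∀ t ∈ Icc x 1, 0 < genFun q t := fun t ht =>
    genFun_pos hq.nonneg hq.summable hqK (hx.1.trans_le ht.1) ht.2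
  have hanti : AntitoneOn (fun t => -Real.log (genFun q t) + derivGenFun q x * Real.log t)
      (Icc x 1) := by
    refine antitoneOn_of_hasDerivWithinAt_nonpos (convex_Icc x 1)
      (f' := fun t => -(derivGenFun q t / genFun q t) + derivGenFun q x * t⁻¹) ?_ ?_ ?_
    · refine (ContinuousOn.log ?_ fun t ht => (hpos t ht).ne').neg.add
        (continuousOn_const.mul (Real.continuousOn_log.mono fun t ht => ?_))
      · exact (continuousOn_genFun hq.nonneg hq.summable).mono
          (Icc_subset_Icc (by linarith [hx.1]) le_rfl)
      · exact (hx.1.trans_le ht.1).ne'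
    · intro t ht
      rw [interior_Icc] at ht
      exact ((((hasDerivAt_genFun hq.nonneg hq.summable hq.summable_mean
        ⟨by linarith [hx.1, ht.1], ht.2⟩).log (hpos t (Ioo_subset_Icc_self ht)).ne').neg).add
        ((Real.hasDerivAt_log (hx.1.trans ht.1).ne').const_mul _)).hasDerivWithinAt
    · intro t ht
      rw [interior_Icc] at ht
      have ht0 : 0 < t := hx.1.trans ht.1
      have : derivGenFun q x * t⁻¹ ≤ derivGenFun q t / genFun q t := by
        rw [div_eq_mul_inv]
        exact mul_le_mul
          (derivGenFun_monotoneOn hq.nonneg hq.summable_mean ⟨hx.1.le, hx.2.le⟩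
            ⟨ht0.le, ht.2.le⟩ ht.1.le)
          (inv_anti₀ (hpos t (Ioo_subset_Icc_self ht)) (hq.genFun_lt_self ⟨ht0, ht.2⟩).le)
          (inv_nonneg.2 ht0.le) (derivGenFun_nonneg hq.nonneg ht0.le)
      linarith
  have h := hanti (left_mem_Icc.2 hx.2.le) (right_mem_Icc.2 hx.2.le) hx.2.le
  simp only [genFun_one hq.tsum_eq_one, Real.log_one, neg_zero, mul_zero, add_zero] at h
  linarith

theorem one_sub_derivGenFun_mul_neg_log_div_le (hq : IsSupercriticalWithoutDeath q) {x : ℝ}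
    (hx : x ∈ Ioo 0 1) :
    1 - derivGenFun q x * -Real.log x / -Real.log (genFun q x) ≤
      (1 - genFun q x) / genFun q x + ∑' k, q k * (k * min (k * (1 - x)) (k * (1 - x))⁻¹) := by
  set z := genFun q x
  set D := derivGenFun q x
  have hz : z ∈ Ioo 0 1 := hq.genFun_mem_Ioo hx
  have hzx : z < x := hq.genFun_lt_self hx
  have hz0 : z ≠ 0 := hz.1.ne'
  have h1z : 0 < 1 - z := by linarith [hz.2]
  have hlogz0 : Real.log z ≠ 0 := (Real.log_neg hz.1 hz.2).ne
  have hlogz : 1 - z ≤ -Real.log z := by linarith [Real.log_le_sub_one_of_pos hz.1]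
  have hlogz' : -Real.log z - (1 - z) ≤ (1 - z) ^ 2 / z := by
    have : (1 - z) ^ 2 / z = z⁻¹ - 1 - (1 - z) := by field_simp
    linarith [Real.one_sub_inv_le_log_of_pos hz.1]
  have hlogx : 1 - x ≤ -Real.log x := by linarith [Real.log_le_sub_one_of_pos hx.1]
  have hkey := hq.derivGenFun_mul_neg_log_le hx
  have hD : 0 ≤ D := derivGenFun_nonneg hq.nonneg hx.1.le
  have hE0 : 0 ≤ 1 - z - D * (1 - x) := by
    rw [one_sub_genFun_sub_eq_tsum hq.nonneg hq.summable hq.tsum_eq_one hq.summable_mean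
      (abs_le.2 ⟨by linarith [hx.1], hx.2.le⟩)]
    exact tsum_nonneg fun k => mul_nonneg (hq.nonneg k) (powRemainder_nonneg k ⟨hx.1.le, hx.2.le⟩)
  calc 1 - D * -Real.log x / -Real.log z
      = (-Real.log z - D * -Real.log x) / -Real.log z := by
        field_simp
        ring
    _ ≤ (-Real.log z - D * -Real.log x) / (1 - z) :=
        div_le_div_of_nonneg_left (by linarith) h1z hlogz
    _ ≤ ((1 - z) ^ 2 / z + (1 - z - D * (1 - x))) / (1 - z) := by
        gcongr
        nlinarith
    _ = (1 - z) / z + (1 - z - D * (1 - x)) / (1 - z) := by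
        field_simp
    _ ≤ (1 - z) / z + (1 - z - D * (1 - x)) / (1 - x) := by
        gcongr
        linarith [hx.2]
    _ ≤ _ := by
        gcongr
        exact one_sub_genFun_sub_div_le hq.nonneg hq.summable hq.tsum_eq_one hq.summable_mean
          ⟨hx.1.le, hx.2⟩

variable {y : ℕ → ℝ}

theorem strictMono_of_genFun_eq (hq : IsSupercriticalWithoutDeath q) (hy : ∀ n, y n ∈ Ioo 0 1)
    (hrec : ∀ n, genFun q (y (n + 1)) = y n) : StrictMono y :=
  strictMono_nat_of_lt_succ fun n => hrec n ▸ hq.genFun_lt_self (hy (n + 1))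

theorem exists_mul_one_sub_succ_le (hq : IsSupercriticalWithoutDeath q)
    (hy : ∀ n, y n ∈ Ioo 0 1) (hrec : ∀ n, genFun q (y (n + 1)) = y n) :
    ∃ θ > 1, ∀ n, θ * (1 - y (n + 1)) ≤ 1 - y n := by
  have hmono := hq.strictMono_of_genFun_eq hy hrec
  have hε : ∀ n, 0 < 1 - y n := fun n => sub_pos.2 (hy n).2
  refine ⟨(1 - y 0) / (1 - y 1), (one_lt_div (hε 1)).2 (by linarith [hmono zero_lt_one]),
    fun n => ?_⟩
  have hslope := one_sub_genFun_div_le hq.nonneg hq.summable hq.tsum_eq_one hq.summable_mean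
    (hy 1).1.le (hmono.monotone (Nat.le_add_left 1 n)) (hy (n + 1)).2
  rw [hrec 0, hrec n, div_le_div_iff₀ (hε 1) (hε (n + 1))] at hslope
  rwa [div_mul_eq_mul_div, div_le_iff₀ (hε 1)]

theorem summable_one_sub_derivGenFun_mul_neg_log_div (hq : IsSupercriticalWithoutDeath q)
    (hy : ∀ n, y n ∈ Ioo 0 1) (hrec : ∀ n, genFun q (y (n + 1)) = y n) :
    Summable fun n => 1 - derivGenFun q (y (n + 1)) * -Real.log (y (n + 1)) / -Real.log (y n) := by
  obtain ⟨θ, hθ, hdecay⟩ := hq.exists_mul_one_sub_succ_le hy hrec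
  have hε : ∀ n, 0 < 1 - y n := fun n => sub_pos.2 (hy n).2
  have hbound := fun n => hq.one_sub_derivGenFun_mul_neg_log_div_le (hy (n + 1))
  simp only [hrec] at hbound
  refine .of_nonneg_of_le (fun n => sub_nonneg.2 ?_) hbound (.add ?_ ?_)
  · rw [← hrec n]
    exact (div_le_one (neg_pos.2 (Real.log_neg (hq.genFun_mem_Ioo (hy (n + 1))).1
      (hq.genFun_mem_Ioo (hy (n + 1))).2))).2 (hq.derivGenFun_mul_neg_log_le (hy (n + 1)))
  · refine .of_nonneg_of_le (fun n => div_nonneg (hε n).le (hy n).1.le) (fun n => ?_)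
      ((summable_of_mul_succ_le hθ (fun n => (hε n).le) hdecay).div_const (y 0))
    exact div_le_div_of_nonneg_left (hε n).le (hy 0).1
      ((hq.strictMono_of_genFun_eq hy hrec).monotone (Nat.zero_le n))
  · exact summable_tsum_mul_min_inv hq.nonneg hq.summable_mean hθ (fun n => hε (n + 1))
      fun n => hdecay (n + 1)

theorem exists_tendsto_prod_derivGenFun_mul_neg_log (hq : IsSupercriticalWithoutDeath q)
    (hy : ∀ n, y n ∈ Ioo 0 1) (hrec : ∀ n, genFun q (y (n + 1)) = y n) :
    ∃ L, 0 < L ∧ Tendsto (fun n => (∏ i ∈ Finset.range n, derivGenFun q (y (i + 1))) *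
      -Real.log (y n)) atTop (𝓝 L) := by
  have hprod : ∀ n, 0 < ∏ i ∈ Finset.range n, derivGenFun q (y (i + 1)) := fun n =>
    Finset.prod_pos fun i _ => hq.derivGenFun_pos (hy (i + 1))
  refine exists_pos_tendsto_of_summable_one_sub_div
    (fun n => mul_pos (hprod n) (neg_pos.2 (Real.log_neg (hy n).1 (hy n).2))) ?_
  refine (hq.summable_one_sub_derivGenFun_mul_neg_log_div hy hrec).congr fun n => ?_
  rw [Finset.prod_range_succ, mul_assoc, mul_div_mul_left _ _ (hprod n).ne']

end IsSupercriticalWithoutDeath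

/-! ### Trees and the branching property -/

theorem memTree_append_singleton {ω : Config} {v : List ℕ} {j : ℕ} :
    memTree ω (v ++ [j]) ↔ memTree ω v ∧ j < ω v := by
  simp only [memTree, List.get_eq_getElem, List.length_append, List.length_singleton]
  constructor
  · intro h
    refine ⟨fun k hk => ?_, ?_⟩
    · simpa [List.getElem_append_left hk, List.take_append_of_le_length hk.le] using h k (by omega)
    · simpa using h v.length (by omega)
  · rintro ⟨hv, hj⟩ k hk
    rcases Nat.lt_succ_iff_lt_or_eq.1 hk with hk | rfl
    · simpa [List.getElem_append_left hk, List.take_append_of_le_length hk.le] using hv k hk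
    · simpa using hj

def level (ω : Config) : ℕ → Finset (List ℕ)
  | 0 => {[]}
  | n + 1 => (level ω n).biUnion fun v => (Finset.range (ω v)).image fun j => v ++ [j]

theorem mem_level {ω : Config} : ∀ {n : ℕ} {v : List ℕ},
    v ∈ level ω n ↔ v.length = n ∧ memTree ω v
  | 0, v => by
    simp only [level, Finset.mem_singleton, List.length_eq_zero_iff]
    exact ⟨fun h => ⟨h, h ▸ fun k hk => absurd hk (Nat.not_lt_zero k)⟩, And.left⟩
  | n + 1, v => by
    simp only [level, Finset.mem_biUnion, Finset.mem_image, Finset.mem_range, mem_level]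
    constructor
    · rintro ⟨w, ⟨rfl, hw⟩, j, hj, rfl⟩
      exact ⟨by simp, memTree_append_singleton.2 ⟨hw, hj⟩⟩
    · rintro ⟨hv, hmem⟩
      obtain ⟨w, j, rfl⟩ := (v.eq_nil_or_concat').resolve_left (by rintro rfl; simp at hv)
      obtain ⟨hw, hj⟩ := memTree_append_singleton.1 hmem
      exact ⟨w, ⟨by simpa using hv, hw⟩, j, hj, rfl⟩

theorem Z_eq_card_level (ω : Config) (n : ℕ) : Z ω [] n = (level ω n).card := by
  rw [Z, ← Nat.card_eq_finsetCard]
  exact Nat.card_congr (Equiv.subtypeEquivRight fun v => by simp [mem_level])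

theorem card_level_succ (ω : Config) (n : ℕ) :
    (level ω (n + 1)).card = ∑ v ∈ level ω n, ω v := by
  rw [level, Finset.card_biUnion]
  · exact Finset.sum_congr rfl fun v _ => by
      rw [Finset.card_image_of_injective _ fun i j h => by simpa using h, Finset.card_range]
  · intro v hv w hw hvw
    simp only [Finset.disjoint_left, Finset.mem_image]
    rintro _ ⟨i, -, rfl⟩ ⟨j, -, h⟩
    have hlen : w.length = v.length := by rw [(mem_level.1 hv).1, (mem_level.1 hw).1]
    exact hvw (List.append_inj h hlen).1.symm

theorem level_congr {ω ω' : Config} {n : ℕ}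
    (h : ∀ k < n, ∀ v ∈ level ω k, v ∈ level ω' k → ω v = ω' v) :
    ∀ k ≤ n, level ω k = level ω' k
  | 0, _ => rfl
  | k + 1, hk => by
    have ih := level_congr h k (by omega)
    simp only [level, ih]
    exact Finset.biUnion_congr rfl fun v hv => by rw [h k (by omega) v (ih ▸ hv) hv]

def lowerLevels (ω : Config) (n : ℕ) : Finset (List ℕ) :=
  (Finset.range n).biUnion (level ω)

theorem mem_lowerLevels {ω : Config} {n : ℕ} {v : List ℕ} :
    v ∈ lowerLevels ω n ↔ ∃ k < n, v ∈ level ω k := by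
  simp [lowerLevels]

theorem disjoint_level_lowerLevels (ω : Config) (n : ℕ) :
    Disjoint (level ω n) (lowerLevels ω n) := by
  refine Finset.disjoint_left.2 fun v hv hv' => ?_
  obtain ⟨k, hk, hvk⟩ := mem_lowerLevels.1 hv'
  have := (mem_level.1 hv).1.symm.trans (mem_level.1 hvk).1
  omega

def cyl (S : Finset (List ℕ)) (g : List ℕ → ℕ) : Set Config := {ω | ∀ u ∈ S, ω u = g u}

theorem measurableSet_cyl (S : Finset (List ℕ)) (g : List ℕ → ℕ) :
    MeasurableSet (cyl S g) := by
  have : cyl S g = ⋂ u ∈ S, {ω | ω u = g u} := by ext; simp [cyl]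
  rw [this]
  exact .biInter S.countable_toSet fun u _ => measurableSet_eq_fun (measurable_pi_apply u)
    measurable_const

/-- The first `n` generations together with their offspring numbers: a countable datum whose
fibres are cylinders (`history_eq_iff`). -/
def history (ω : Config) (n : ℕ) : List ℕ →₀ ℕ :=
  Finsupp.onFinset (lowerLevels ω n) (fun v => if v ∈ lowerLevels ω n then ω v else 0)
    fun v hv => by by_contra h; simp [h] at hv

theorem history_apply (ω : Config) (n : ℕ) (v : List ℕ) :
    history ω n v = if v ∈ lowerLevels ω n then ω v else 0 := rfl

theorem lowerLevels_congr {ω ω' : Config} {n : ℕ}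
    (h : ∀ k < n, ∀ v ∈ level ω k, v ∈ level ω' k → ω v = ω' v) :
    lowerLevels ω n = lowerLevels ω' n :=
  Finset.biUnion_congr rfl fun k hk => level_congr h k (Finset.mem_range.1 hk).le

theorem history_eq_iff {ω ω₀ : Config} {n : ℕ} :
    history ω n = history ω₀ n ↔ ω ∈ cyl (lowerLevels ω₀ n) ω₀ := by
  constructor
  · intro h
    have hagree : ∀ k < n, ∀ v ∈ level ω k, v ∈ level ω₀ k → ω v = ω₀ v := by
      intro k hk v hv hv₀
      simpa [history_apply, mem_lowerLevels.2 ⟨k, hk, hv⟩, mem_lowerLevels.2 ⟨k, hk, hv₀⟩]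
        using DFunLike.congr_fun h v
    intro v hv
    simpa [history_apply, hv, lowerLevels_congr hagree] using DFunLike.congr_fun h v
  · intro h
    have hD : lowerLevels ω n = lowerLevels ω₀ n :=
      lowerLevels_congr fun k hk v _ hv₀ => h v (mem_lowerLevels.2 ⟨k, hk, hv₀⟩)
    ext v
    by_cases hv : v ∈ lowerLevels ω₀ n <;> simp [history_apply, hD, hv, h v]

theorem level_eq_of_history_eq {ω ω₀ : Config} {n : ℕ} (h : history ω n = history ω₀ n) :
    level ω n = level ω₀ n := by
  refine level_congr (fun k hk v hv hv₀ => ?_) n le_rfl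
  exact history_eq_iff.1 h v (mem_lowerLevels.2 ⟨k, hk, hv₀⟩)

theorem measurableSet_history_fiber (n : ℕ) (i : List ℕ →₀ ℕ) :
    MeasurableSet {ω : Config | history ω n = i} := by
  rcases Set.eq_empty_or_nonempty {ω : Config | history ω n = i} with he | ⟨ω₀, rfl⟩
  · exact he ▸ .empty
  · simpa only [history_eq_iff, Set.ofPred_mem_eq] using measurableSet_cyl _ _

theorem measurable_Z (n : ℕ) : Measurable fun ω : Config => Z ω [] n := by
  refine measurable_to_countable' fun z => ?_
  have : (fun ω : Config => Z ω [] n) ⁻¹' {z} =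
      ⋃ (i : List ℕ →₀ ℕ) (_ : ∃ ω, history ω n = i ∧ Z ω [] n = z), {ω | history ω n = i} := by
    ext ω
    simp only [Set.mem_preimage, Set.mem_singleton_iff, Set.mem_iUnion, Set.mem_ofPred_eq]
    refine ⟨fun h => ⟨_, ⟨ω, rfl, h⟩, rfl⟩, ?_⟩
    rintro ⟨_, ⟨ω', rfl, rfl⟩, h⟩
    rw [Z_eq_card_level, Z_eq_card_level, level_eq_of_history_eq h]
  rw [this]
  exact .iUnion fun i => .iUnion fun _ => measurableSet_history_fiber n i

theorem lintegral_eq_tsum_history (μ : Measure Config) (n : ℕ) (f : Config → ℝ≥0∞) :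
    ∫⁻ ω, f ω ∂μ = ∑' i : List ℕ →₀ ℕ, ∫⁻ ω in {ω | history ω n = i}, f ω ∂μ := by
  have hcover : (⋃ i : List ℕ →₀ ℕ, {ω : Config | history ω n = i}) = Set.univ :=
    Set.eq_univ_of_forall fun ω => Set.mem_iUnion.2 ⟨history ω n, rfl⟩
  rw [← setLIntegral_univ, ← hcover, lintegral_iUnion (measurableSet_history_fiber n)]
  exact fun i j hij => Set.disjoint_left.2 fun ω hi hj => hij (hi.symm.trans hj)

theorem cyl_eq_iUnion_update {S : Finset (List ℕ)} {a : List ℕ} (ha : a ∉ S) (g : List ℕ → ℕ) :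
    cyl S g = ⋃ j : ℕ, cyl (insert a S) (Function.update g a j) := by
  ext ω
  simp only [cyl, Set.mem_iUnion, Set.mem_ofPred_eq, Finset.forall_mem_insert,
    Function.update_self]
  refine ⟨fun h => ⟨ω a, rfl, fun u hu => ?_⟩, fun ⟨j, _, h⟩ u hu => ?_⟩ <;>
  · have hua : u ≠ a := fun h => ha (h ▸ hu)
    simpa [Function.update_of_ne hua] using h u hu

theorem pairwise_disjoint_cyl_update (S : Finset (List ℕ)) (a : List ℕ) (g : List ℕ → ℕ) :
    Pairwise (Function.onFun Disjoint fun j : ℕ => cyl (insert a S) (Function.update g a j)) :=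
  fun i j hij => Set.disjoint_left.2 fun ω hi hj => hij <| by
    simpa using (hi a (Finset.mem_insert_self a S)).symm.trans (hj a (Finset.mem_insert_self a S))

variable {GW : Measure Config}

theorem measure_cyl_insert (hGW : IsGW q GW) {S : Finset (List ℕ)} {a : List ℕ} (ha : a ∉ S)
    (g : List ℕ → ℕ) (j : ℕ) :
    GW (cyl (insert a S) (Function.update g a j)) = ENNReal.ofReal (q j) * GW (cyl S g) := by
  rw [cyl, cyl, hGW.2, hGW.2, Finset.prod_insert ha, Function.update_self]
  congr 1
  exact Finset.prod_congr rfl fun u hu => by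
    rw [Function.update_of_ne (by rintro rfl; exact ha hu)]

/-- Given the offspring numbers on `S`, those on a disjoint set `V` are i.i.d. with law `q`. -/
theorem setLIntegral_cyl_prod_pow (hGW : IsGW q GW) (t : ℝ≥0∞) (V : Finset (List ℕ)) :
    ∀ (S : Finset (List ℕ)) (g : List ℕ → ℕ), Disjoint V S →
      ∫⁻ ω in cyl S g, ∏ v ∈ V, t ^ ω v ∂GW =
        GW (cyl S g) * (∑' k, ENNReal.ofReal (q k) * t ^ k) ^ V.card := by
  induction V using Finset.induction_on with
  | empty => intro S g _; simp
  | @insert a V haV ih =>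
    intro S g hdisj
    have haS : a ∉ S := Finset.disjoint_left.1 hdisj (Finset.mem_insert_self a V)
    have hVS : Disjoint V S := Finset.disjoint_of_subset_left (Finset.subset_insert a V) hdisj
    have hpiece : ∀ j : ℕ, ∫⁻ ω in cyl (insert a S) (Function.update g a j),
        ∏ v ∈ insert a V, t ^ ω v ∂GW =
          t ^ j * (ENNReal.ofReal (q j) * GW (cyl S g) *
            (∑' k, ENNReal.ofReal (q k) * t ^ k) ^ V.card) := by
      intro j
      have hcongr : Set.EqOn (fun ω : Config => ∏ v ∈ insert a V, t ^ ω v)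
          (fun ω => t ^ j * ∏ v ∈ V, t ^ ω v) (cyl (insert a S) (Function.update g a j)) := by
        intro ω hω
        simp only [Finset.prod_insert haV, hω a (Finset.mem_insert_self a S),
          Function.update_self]
      rw [setLIntegral_congr_fun (measurableSet_cyl _ _) hcongr,
        lintegral_const_mul _ (by fun_prop),
        ih _ _ (Finset.disjoint_insert_right.2 ⟨haV, hVS⟩), measure_cyl_insert hGW haS]
    rw [cyl_eq_iUnion_update haS g,
      lintegral_iUnion (fun j => measurableSet_cyl _ _) (pairwise_disjoint_cyl_update S a g),
      ← cyl_eq_iUnion_update haS g, tsum_congr hpiece, Finset.card_insert_of_notMem haV,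
      pow_succ]
    simp_rw [← mul_assoc, ENNReal.tsum_mul_right]
    rw [tsum_congr fun j => mul_comm (t ^ j) _]
    ring

theorem lintegral_pow_Z_succ (hGW : IsGW q GW) (t : ℝ≥0∞) (n : ℕ) :
    ∫⁻ ω, t ^ Z ω [] (n + 1) ∂GW =
      ∫⁻ ω, (∑' k, ENNReal.ofReal (q k) * t ^ k) ^ Z ω [] n ∂GW := by
  rw [lintegral_eq_tsum_history GW n, lintegral_eq_tsum_history GW n]
  refine tsum_congr fun i => ?_
  rcases Set.eq_empty_or_nonempty {ω : Config | history ω n = i} with he | ⟨ω₀, rfl⟩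
  · simp [he]
  have hfib : {ω | history ω n = history ω₀ n} = cyl (lowerLevels ω₀ n) ω₀ := by
    ext; exact history_eq_iff
  have hlevel : ∀ ω ∈ cyl (lowerLevels ω₀ n) ω₀, level ω n = level ω₀ n :=
    fun ω hω => level_eq_of_history_eq (history_eq_iff.2 hω)
  have hsucc : Set.EqOn (fun ω => t ^ Z ω [] (n + 1)) (fun ω => ∏ v ∈ level ω₀ n, t ^ ω v)
      (cyl (lowerLevels ω₀ n) ω₀) := fun ω hω => by
    simp only [Z_eq_card_level, card_level_succ, hlevel ω hω, Finset.prod_pow_eq_pow_sum]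
  have hcur : Set.EqOn (fun ω => (∑' k, ENNReal.ofReal (q k) * t ^ k) ^ Z ω [] n)
      (fun _ => (∑' k, ENNReal.ofReal (q k) * t ^ k) ^ (level ω₀ n).card)
      (cyl (lowerLevels ω₀ n) ω₀) := fun ω hω => by
    simp only [Z_eq_card_level, hlevel ω hω]
  rw [hfib, setLIntegral_congr_fun (measurableSet_cyl _ _) hsucc,
    setLIntegral_congr_fun (measurableSet_cyl _ _) hcur,
    setLIntegral_cyl_prod_pow hGW t _ _ _ (disjoint_level_lowerLevels ω₀ n),
    setLIntegral_const, mul_comm]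

theorem pgf_eq_toReal_lintegral (GW : Measure Config) {x : ℝ} (hx : 0 ≤ x) (n : ℕ) :
    pgf GW n x = (∫⁻ ω, ENNReal.ofReal x ^ Z ω [] n ∂GW).toReal := by
  rw [pgf, integral_eq_lintegral_of_nonneg_ae (.of_forall fun ω => pow_nonneg hx _)
    ((measurable_from_top.comp (measurable_Z n)).aestronglyMeasurable)]
  simp_rw [ENNReal.ofReal_pow hx]

theorem pgf_zero (GW : Measure Config) [IsProbabilityMeasure GW] (x : ℝ) : pgf GW 0 x = x := by
  simp [pgf, Z_eq_card_level, level]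

theorem pgf_succ (hGW : IsGW q GW) (hq0 : ∀ k, 0 ≤ q k) (hqs : Summable q) {x : ℝ}
    (hx : x ∈ Icc 0 1) (n : ℕ) : pgf GW (n + 1) x = pgf GW n (genFun q x) := by
  have hF : ENNReal.ofReal (genFun q x) = ∑' k, ENNReal.ofReal (q k) * ENNReal.ofReal x ^ k := by
    rw [genFun, ENNReal.ofReal_tsum_of_nonneg (fun k => mul_nonneg (hq0 k) (pow_nonneg hx.1 k))
      (summable_genFun_term hq0 hqs (abs_le.2 ⟨by linarith [hx.1], hx.2⟩))]
    simp_rw [ENNReal.ofReal_mul (hq0 _), ENNReal.ofReal_pow hx.1]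
  rw [pgf_eq_toReal_lintegral GW hx.1, pgf_eq_toReal_lintegral GW (genFun_nonneg hq0 hx.1), hF,
    lintegral_pow_Z_succ hGW]

theorem pgf_eqOn_iterate (hGW : IsGW q GW) (hq0 : ∀ k, 0 ≤ q k) (hqs : Summable q)
    (hq1 : ∑' k, q k = 1) (n : ℕ) : EqOn (pgf GW n) (genFun q)^[n] (Icc 0 1) := by
  induction n with
  | zero => have := hGW.1; exact fun x _ => pgf_zero GW x
  | succ n ih =>
    intro x hx
    rw [pgf_succ hGW hq0 hqs hx, ih (genFun_mem_Icc hq0 hqs hq1 hx), Function.iterate_succ_apply]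

theorem hasDerivAt_pgf_of_orbit (hGW : IsGW q GW) (hq : IsSupercriticalWithoutDeath q)
    {y : ℕ → ℝ} (hy : ∀ n, y n ∈ Ioo 0 1) (hrec : ∀ n, genFun q (y (n + 1)) = y n) (n : ℕ) :
    HasDerivAt (pgf GW n) (∏ i ∈ Finset.range n, derivGenFun q (y (i + 1))) (y n) :=
  (hasDerivAt_iterate_of_orbit (fun n => hasDerivAt_genFun hq.nonneg hq.summable
    hq.summable_mean ⟨by linarith [(hy (n + 1)).1], (hy (n + 1)).2⟩) hrec n).congr_of_eventuallyEq
    (eventuallyEq_of_mem (Icc_mem_nhds (hy n).1 (hy n).2)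
      (pgf_eqOn_iterate hGW hq.nonneg hq.summable hq.tsum_eq_one n))
end GaltonWatson

open GaltonWatson in
/-- For a Galton–Watson process with offspring distribution `q` satisfying `q 0 = 0` and
mean `m ∈ (1, ∞)`, with `φ_n` the probability generating function of the `n`-th
generation, `φinv n` its inverse on `(0,1)` and `c n = -1 / ln (φinv n s)`: for every
`s ∈ (0,1)`, the ratio `φ'_n(φ_n^{-1}(s)) / c_n` converges, as `n → ∞`, to a positive
finite constant. -/
theorem pgf_deriv_div_c_tendsto_positive_constant
    (q : ℕ → ℝ) (hq_nonneg : ∀ ℓ, 0 ≤ q ℓ) (hq_zero : q 0 = 0) (hq_sum : ∑' ℓ, q ℓ = 1)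
    (m : ℝ) (hm_def : m = ∑' ℓ : ℕ, (ℓ : ℝ) * q ℓ) (hm_one : 1 < m)
    (GW : Measure Config) (hGW : IsGW q GW)
    (s : ℝ) (hs : s ∈ Set.Ioo (0 : ℝ) 1)
    (φinv : ℕ → ℝ → ℝ)
    (hφinv : ∀ n, ∀ x ∈ Set.Ioo (0 : ℝ) 1,
      φinv n x ∈ Set.Ioo (0 : ℝ) 1 ∧ pgf GW n (φinv n x) = x)
    (hφinv_left : ∀ n, ∀ y ∈ Set.Ioo (0 : ℝ) 1, φinv n (pgf GW n y) = y)
    (c : ℕ → ℝ) (hc : ∀ n, c n = -1 / Real.log (φinv n s)) :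
    ∃ L : ℝ, 0 < L ∧
      Tendsto (fun n => deriv (pgf GW n) (φinv n s) / c n) atTop (nhds L) := by
  have hq : IsSupercriticalWithoutDeath q := .of_tsum hq_nonneg hq_zero hq_sum (hm_def ▸ hm_one)
  set y : ℕ → ℝ := fun n => φinv n s
  have hy : ∀ n, y n ∈ Ioo 0 1 := fun n => (hφinv n s hs).1
  have hrec : ∀ n, genFun q (y (n + 1)) = y n := fun n => by
    have h := hφinv_left n _ (hq.genFun_mem_Ioo (hy (n + 1)))
    rw [← pgf_succ hGW hq.nonneg hq.summable (Ioo_subset_Icc_self (hy (n + 1))),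
      (hφinv (n + 1) s hs).2] at h
    exact h.symm
  obtain ⟨L, hL, hlim⟩ := hq.exists_tendsto_prod_derivGenFun_mul_neg_log hy hrec
  refine ⟨L, hL, hlim.congr fun n => ?_⟩
  rw [hc n, (hasDerivAt_pgf_of_orbit hGW hq hy hrec n).deriv, div_div_eq_mul_div, div_neg,
    div_one, mul_neg]

end
end

section
/- Let ν be an ℕ-valued random variable with E[ν ln(ν)] = ∞, and let 1 < a < b. Then Σ_{n≥0} E[ν · 1_{a^n < ν < b^n}] = ∞. -/
open MeasureTheory Filter Set
open scoped ENNReal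

/-- Let `ν` be an `ℕ`-valued random variable with `E[ν ln ν] = ∞`, and let `1 < a < b`.
Then `Σ_{n ≥ 0} E[ν · 1_{a^n < ν < b^n}] = ∞`. -/
theorem tsum_integral_indicator_eq_top_of_nlogn_infinite
    {Ω : Type*} [MeasurableSpace Ω] (μ : Measure Ω) [IsProbabilityMeasure μ]
    (ν : Ω → ℕ) (hν : Measurable ν)
    (hXlogX : ∫⁻ x, ENNReal.ofReal ((ν x : ℝ) * Real.log (ν x)) ∂μ = ⊤)
    (a b : ℝ) (ha : 1 < a) (hab : a < b) :
    ∑' n : ℕ, ∫⁻ x in {x | a ^ n < (ν x : ℝ) ∧ (ν x : ℝ) < b ^ n}, (ν x : ℝ≥0∞) ∂μ = ⊤ := by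
  have hb : 1 < b := ha.trans hab
  have ha0 : 0 < a := by linarith
  have hb0 : 0 < b := by linarith
  have hla0 : 0 < Real.log a := Real.log_pos ha
  have hlb0 : 0 < Real.log b := Real.log_pos hb
  have hlalb : Real.log a < Real.log b := Real.log_lt_log ha0 hab
  set c : ℝ := 1 / Real.log a - 1 / Real.log b with hc
  have hc0 : 0 < c := by
    have h1 : 1 / Real.log b < 1 / Real.log a := one_div_lt_one_div_of_lt hla0 hlalb
    simp only [hc]; linarith
  clear_value c
  -- choose a cutoff N
  set N : ℕ := max 2 ⌈Real.exp (2 / c)⌉₊ with hN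
  have hN2 : 2 ≤ N := le_max_left _ _
  have hN0 : 0 < N := by omega
  have hNc : 2 ≤ c * Real.log N := by
    have h1 : Real.exp (2 / c) ≤ (⌈Real.exp (2 / c)⌉₊ : ℝ) := Nat.le_ceil _
    have h2 : ((⌈Real.exp (2 / c)⌉₊ : ℕ) : ℝ) ≤ (N : ℝ) := by
      exact_mod_cast le_max_right 2 ⌈Real.exp (2 / c)⌉₊
    have h3 : Real.exp (2 / c) ≤ (N : ℝ) := h1.trans h2
    have h4 : 2 / c ≤ Real.log N := by
      rw [Real.le_log_iff_exp_le (by exact_mod_cast hN0)]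
      exact h3
    have h5 : c * (2 / c) ≤ c * Real.log N := mul_le_mul_of_nonneg_left h4 hc0.le
    rwa [mul_div_cancel₀ 2 hc0.ne'] at h5
  have hνr : Measurable fun x => ((ν x : ℕ) : ℝ) := measurable_from_top.comp hν
  set A : ℕ → Set Ω := fun n => {x | a ^ n < (ν x : ℝ) ∧ (ν x : ℝ) < b ^ n} with hA
  have hAmeas : ∀ n, MeasurableSet (A n) := fun n =>
    (measurableSet_lt measurable_const hνr).inter (measurableSet_lt hνr measurable_const)
  -- key pointwise bound
  have key : ∀ x : Ω, N ≤ ν x →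
      ENNReal.ofReal ((c / 2) * ((ν x : ℝ) * Real.log (ν x))) ≤
      ∑' n : ℕ, (A n).indicator (fun x => ((ν x : ℕ) : ℝ≥0∞)) x := by
    intro x hx
    have hm2 : 2 ≤ ν x := hN2.trans hx
    have hm1 : (1 : ℝ) < (ν x : ℝ) := by exact_mod_cast hm2
    have hm0 : (0 : ℝ) < (ν x : ℝ) := by linarith
    have hlm0 : 0 < Real.log (ν x) := Real.log_pos hm1
    set L : ℝ := Real.log (ν x) / Real.log b with hL
    set R : ℝ := Real.log (ν x) / Real.log a with hR
    have hL0 : 0 ≤ L := by rw [hL]; positivity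
    have hR0 : 0 ≤ R := by rw [hR]; positivity
    have hRL : R - L = c * Real.log (ν x) := by rw [hR, hL, hc]; ring
    have hclogm : 2 ≤ c * Real.log (ν x) := by
      have hlog : Real.log N ≤ Real.log (ν x) :=
        Real.log_le_log (by exact_mod_cast hN0) (by exact_mod_cast hx)
      nlinarith
    set F : Finset ℕ := Finset.Ico (⌊L⌋₊ + 1) ⌈R⌉₊ with hF
    have hmem : ∀ n ∈ F, x ∈ A n := by
      intro n hn
      rw [hF, Finset.mem_Ico] at hn
      have hnL : L < (n : ℝ) := by
        have h1 : ((⌊L⌋₊ + 1 : ℕ) : ℝ) ≤ (n : ℝ) := by exact_mod_cast hn.1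
        have h2 : L < (⌊L⌋₊ : ℝ) + 1 := Nat.lt_floor_add_one L
        push_cast at h1
        linarith
      have hnR : (n : ℝ) < R := by
        have h1 : (n : ℝ) + 1 ≤ (⌈R⌉₊ : ℝ) := by exact_mod_cast hn.2
        have h2 : (⌈R⌉₊ : ℝ) < R + 1 := Nat.ceil_lt_add_one hR0
        linarith
      constructor
      · have h1 : (n : ℝ) * Real.log a < Real.log (ν x) := by
          have := mul_lt_mul_of_pos_right hnR hla0
          rwa [hR, div_mul_cancel₀ _ hla0.ne'] at this
        have h2 : Real.log (a ^ n) < Real.log (ν x) := by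
          rwa [Real.log_pow]
        exact (Real.log_lt_log_iff (by positivity) hm0).mp h2
      · have h1 : Real.log (ν x) < (n : ℝ) * Real.log b := by
          have := mul_lt_mul_of_pos_right hnL hlb0
          rwa [hL, div_mul_cancel₀ _ hlb0.ne'] at this
        have h2 : Real.log (ν x) < Real.log (b ^ n) := by rwa [Real.log_pow]
        exact (Real.log_lt_log_iff hm0 (by positivity)).mp h2
    have hle : ⌊L⌋₊ + 1 ≤ ⌈R⌉₊ := by
      have h1 : R ≤ (⌈R⌉₊ : ℝ) := Nat.le_ceil R
      have h2 : (⌊L⌋₊ : ℝ) ≤ L := Nat.floor_le hL0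
      have : ((⌊L⌋₊ + 1 : ℕ) : ℝ) ≤ (⌈R⌉₊ : ℝ) := by push_cast; linarith
      exact_mod_cast this
    have hcard : (c / 2) * Real.log (ν x) ≤ (F.card : ℝ) := by
      rw [hF, Nat.card_Ico]
      have h1 : R ≤ (⌈R⌉₊ : ℝ) := Nat.le_ceil R
      have h2 : (⌊L⌋₊ : ℝ) ≤ L := Nat.floor_le hL0
      have h3 : ((⌈R⌉₊ - (⌊L⌋₊ + 1) : ℕ) : ℝ) = (⌈R⌉₊ : ℝ) - (⌊L⌋₊ : ℝ) - 1 := by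
        rw [Nat.cast_sub hle]; push_cast; ring
      rw [h3]
      have h4 : c / 2 * Real.log (ν x) ≤ c * Real.log (ν x) - 1 := by nlinarith
      have h5 : c * Real.log (ν x) - 1 ≤ (⌈R⌉₊ : ℝ) - (⌊L⌋₊ : ℝ) - 1 := by
        rw [← hRL]; linarith
      linarith
    calc ENNReal.ofReal ((c / 2) * ((ν x : ℝ) * Real.log (ν x)))
        ≤ ENNReal.ofReal (((F.card * ν x : ℕ) : ℝ)) := by
          apply ENNReal.ofReal_le_ofReal
          push_cast
          nlinarith
      _ = ((F.card * ν x : ℕ) : ℝ≥0∞) := ENNReal.ofReal_natCast _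
      _ = ∑ n ∈ F, (A n).indicator (fun x => ((ν x : ℕ) : ℝ≥0∞)) x := by
          rw [Finset.sum_congr rfl fun n hn => Set.indicator_of_mem (hmem n hn) _,
            Finset.sum_const, nsmul_eq_mul]
          push_cast
          ring
      _ ≤ ∑' n : ℕ, (A n).indicator (fun x => ((ν x : ℕ) : ℝ≥0∞)) x :=
          ENNReal.sum_le_tsum F
  -- the set where ν is large
  set S : Set Ω := {x | N ≤ ν x} with hS
  have hSmeas : MeasurableSet S := hν measurableSet_Ici
  have hg : Measurable fun x => ENNReal.ofReal ((ν x : ℝ) * Real.log (ν x)) :=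
    ENNReal.measurable_ofReal.comp (hνr.mul (Real.measurable_log.comp hνr))
  -- the integral over Sᶜ is finite
  have hcomp : ∫⁻ x in Sᶜ, ENNReal.ofReal ((ν x : ℝ) * Real.log (ν x)) ∂μ ≠ ⊤ := by
    have hbdd : ∀ x ∈ Sᶜ, ENNReal.ofReal ((ν x : ℝ) * Real.log (ν x))
        ≤ ENNReal.ofReal ((N : ℝ) * Real.log N) := by
      intro x hx
      simp only [hS, mem_compl_iff, mem_setOf_eq, not_le] at hx
      apply ENNReal.ofReal_le_ofReal
      rcases Nat.eq_zero_or_pos (ν x) with h0 | h1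
      · rw [h0]
        have hlN : 0 < Real.log N :=
          Real.log_pos (by exact_mod_cast Nat.lt_of_lt_of_le Nat.one_lt_two hN2)
        simp only [Nat.cast_zero, Real.log_zero, mul_zero, zero_mul]
        exact mul_nonneg (Nat.cast_nonneg _) hlN.le
      · have hm1 : (1 : ℝ) ≤ (ν x : ℝ) := by exact_mod_cast h1
        have hmN : (ν x : ℝ) ≤ (N : ℝ) := by exact_mod_cast hx.le
        have hlog : Real.log (ν x) ≤ Real.log N := Real.log_le_log (by linarith) hmN
        have hlog0 : 0 ≤ Real.log (ν x) := Real.log_nonneg hm1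
        nlinarith
    have hle2 : ∫⁻ x in Sᶜ, ENNReal.ofReal ((ν x : ℝ) * Real.log (ν x)) ∂μ
        ≤ ENNReal.ofReal ((N : ℝ) * Real.log N) * μ Sᶜ := by
      calc ∫⁻ x in Sᶜ, ENNReal.ofReal ((ν x : ℝ) * Real.log (ν x)) ∂μ
          ≤ ∫⁻ _ in Sᶜ, ENNReal.ofReal ((N : ℝ) * Real.log N) ∂μ :=
            setLIntegral_mono' hSmeas.compl hbdd
        _ = ENNReal.ofReal ((N : ℝ) * Real.log N) * μ Sᶜ := setLIntegral_const _ _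
    exact ne_top_of_le_ne_top
      (ENNReal.mul_ne_top ENNReal.ofReal_ne_top (measure_ne_top μ _)) hle2
  have hStop : ∫⁻ x in S, ENNReal.ofReal ((ν x : ℝ) * Real.log (ν x)) ∂μ = ⊤ := by
    have hsplit := lintegral_add_compl
      (f := fun x => ENNReal.ofReal ((ν x : ℝ) * Real.log (ν x))) (μ := μ) hSmeas
    rw [hXlogX] at hsplit
    by_contra h
    exact (ENNReal.add_ne_top.mpr ⟨h, hcomp⟩) hsplit
  -- main divergent integral
  have hmain : ∫⁻ x in S, ENNReal.ofReal ((c / 2) * ((ν x : ℝ) * Real.log (ν x))) ∂μ = ⊤ := by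
    have heq : ∀ x, ENNReal.ofReal ((c / 2) * ((ν x : ℝ) * Real.log (ν x)))
        = ENNReal.ofReal (c / 2) * ENNReal.ofReal ((ν x : ℝ) * Real.log (ν x)) := fun x =>
      ENNReal.ofReal_mul (by positivity)
    simp_rw [heq]
    rw [lintegral_const_mul _ hg, hStop, ENNReal.mul_top]
    simp only [ne_eq, ENNReal.ofReal_eq_zero, not_le]
    positivity
  -- conclude
  have hlin : ∀ n : ℕ, ∫⁻ x in A n, ((ν x : ℕ) : ℝ≥0∞) ∂μ
      = ∫⁻ x, (A n).indicator (fun x => ((ν x : ℕ) : ℝ≥0∞)) x ∂μ := fun n =>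
    (lintegral_indicator (hAmeas n) _).symm
  have hνe : Measurable fun x => ((ν x : ℕ) : ℝ≥0∞) := measurable_from_top.comp hν
  rw [tsum_congr hlin, ← lintegral_tsum fun n => ((hνe.indicator (hAmeas n)).aemeasurable)]
  refine top_unique ?_
  calc (⊤ : ℝ≥0∞) = ∫⁻ x in S, ENNReal.ofReal ((c / 2) * ((ν x : ℝ) * Real.log (ν x))) ∂μ :=
        hmain.symm
    _ ≤ ∫⁻ x in S, ∑' n : ℕ, (A n).indicator (fun x => ((ν x : ℕ) : ℝ≥0∞)) x ∂μ :=
        setLIntegral_mono' hSmeas fun x hx => key x hx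
    _ ≤ ∫⁻ x, ∑' n : ℕ, (A n).indicator (fun x => ((ν x : ℕ) : ℝ≥0∞)) x ∂μ :=
        setLIntegral_le_lintegral _ _
end

section
/- Let (W_i)_{i≥1} be i.i.d. nonnegative random variables with E[W_1] = ∞, let (c_n) be positive reals with c_{n+1}/c_n → m for some m > 1, and let 1 < a and 1 < b < m. Then d_n := e^{(b^n − 1)/c_n} · P(Σ_{i=1}^{⌊a^n⌋} W_i ≤ a^n) tends to 0 as n → ∞. -/
open MeasureTheory ProbabilityTheory Filter Set
open scoped Topology ENNReal

/-!
Truncate: since `E[W₀] = ∞`, some truncation `min W₀ K` has mean larger than `2`, and the strong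
law of large numbers for the truncated variables shows that `P(Σ_{i<N} Wᵢ ≤ 2N) → 0`. As
`a^n ≤ 2⌊a^n⌋`, the probabilities in the statement tend to `0`. The exponential factor tends to
`1`, because `c` grows geometrically with ratio `m > b`, so that `b^n / c n` is summable by the
ratio test.
-/

section Truncation

variable {Ω : Type*} [MeasurableSpace Ω] {μ : Measure Ω} [IsFiniteMeasure μ]

theorem integrable_min_const {f : Ω → ℝ} (hf : AEStronglyMeasurable f μ) (hf0 : 0 ≤ f) {K : ℝ}
    (hK : 0 ≤ K) : Integrable (fun x => min (f x) K) μ :=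
  (integrable_const K).mono' (hf.inf aestronglyMeasurable_const)
    (ae_of_all _ fun x => by
      rw [Real.norm_of_nonneg (le_min (hf0 x) hK)]
      exact min_le_right _ _)

theorem exists_lt_integral_min_natCast {f : Ω → ℝ} (hf : Measurable f) (hf0 : 0 ≤ f)
    (htop : ∫⁻ x, ENNReal.ofReal (f x) ∂μ = ∞) (C : ℝ) :
    ∃ K : ℕ, C < ∫ x, min (f x) K ∂μ := by
  have hsup : ⨆ K : ℕ, ∫⁻ x, ENNReal.ofReal (min (f x) K) ∂μ = ∞ := by
    rw [← lintegral_iSup (fun K => (hf.min measurable_const).ennreal_ofReal)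
      (fun K L hKL x => ENNReal.ofReal_le_ofReal (min_le_min_left _ (by exact_mod_cast hKL))),
      ← htop]
    congr with x
    refine le_antisymm (iSup_le fun K => ENNReal.ofReal_le_ofReal (min_le_left _ _)) ?_
    exact le_iSup_of_le ⌈f x⌉₊ (by rw [min_eq_left (Nat.le_ceil _)])
  obtain ⟨K, hK⟩ := lt_iSup_iff.mp (hsup ▸ ENNReal.ofReal_lt_top : ENNReal.ofReal C < _)
  rw [← ofReal_integral_eq_lintegral_ofReal
    (integrable_min_const hf.aestronglyMeasurable hf0 K.cast_nonneg)
    (ae_of_all _ fun x => le_min (hf0 x) K.cast_nonneg)] at hK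
  exact ⟨K, (ENNReal.ofReal_lt_ofReal_iff'.mp hK).1⟩

theorem tendsto_measure_sum_le_mul_of_lintegral_eq_top {W : ℕ → Ω → ℝ}
    (hW_meas : ∀ i, Measurable (W i)) (hW₀ : 0 ≤ W 0)
    (hW_indep : Pairwise fun i j => W i ⟂ᵢ[μ] W j) (hW_ident : ∀ i, IdentDistrib (W i) (W 0) μ μ)
    (htop : ∫⁻ x, ENNReal.ofReal (W 0 x) ∂μ = ∞) (C : ℝ) :
    Tendsto (fun N : ℕ => μ {x | ∑ i ∈ Finset.range N, W i x ≤ C * N}) atTop (𝓝 0) := by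
  obtain ⟨K, hK⟩ := exists_lt_integral_min_natCast (hW_meas 0) hW₀ htop C
  have htrunc : Measurable fun y : ℝ => min y K := measurable_id.min measurable_const
  let V : ℕ → Ω → ℝ := fun i => (fun y => min y K) ∘ W i
  have hV_int : Integrable (V 0) μ :=
    integrable_min_const (hW_meas 0).aestronglyMeasurable hW₀ K.cast_nonneg
  have hslln := strong_law_ae_real V hV_int (fun i j hij => (hW_indep hij).comp htrunc htrunc)
    fun i => (hW_ident i).comp htrunc
  have h_lim : ∀ᵐ x ∂μ, ∀ᶠ N in atTop,
      x ∈ {x | ∑ i ∈ Finset.range N, W i x ≤ C * N} ↔ x ∈ (∅ : Set Ω) := by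
    filter_upwards [hslln] with x hx
    filter_upwards [hx.eventually (lt_mem_nhds hK), eventually_gt_atTop 0] with N hN hN0
    rw [lt_div_iff₀ (by exact_mod_cast hN0)] at hN
    have hVW : ∑ i ∈ Finset.range N, V i x ≤ ∑ i ∈ Finset.range N, W i x :=
      Finset.sum_le_sum fun i _ => min_le_left _ _
    simp only [mem_empty_iff_false, iff_false, not_le]
    linarith
  simpa using tendsto_measure_of_ae_tendsto_indicator_of_isFiniteMeasure atTop
    MeasurableSet.empty (fun N => measurableSet_le (Finset.measurable_sum _ fun i _ => hW_meas i)
      measurable_const) h_lim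

end Truncation

theorem tendsto_pow_div_of_tendsto_ratio {c : ℕ → ℝ} {m b : ℝ} (hc : ∀ n, 0 < c n)
    (hcm : Tendsto (fun n => c (n + 1) / c n) atTop (𝓝 m)) (hb : 0 < b) (hbm : b < m) :
    Tendsto (fun n => b ^ n / c n) atTop (𝓝 0) := by
  have hm : 0 < m := hb.trans hbm
  have hratio : ∀ n, ‖b ^ (n + 1) / c (n + 1)‖ / ‖b ^ n / c n‖ = b / (c (n + 1) / c n) := by
    intro n
    have := hc n
    have := hc (n + 1)
    rw [Real.norm_of_nonneg (by positivity), Real.norm_of_nonneg (by positivity)]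
    field_simp
    ring
  refine (summable_of_ratio_test_tendsto_lt_one ((div_lt_one hm).2 hbm)
    (Eventually.of_forall fun n => (div_pos (pow_pos hb n) (hc n)).ne') ?_).tendsto_atTop_zero
  simp_rw [hratio]
  exact tendsto_const_nhds.div hcm hm.ne'

theorem exp_mul_prob_sum_le_tendsto_zero_general
    {Ω : Type*} [MeasurableSpace Ω] (μ : Measure Ω) [IsProbabilityMeasure μ]
    (W : ℕ → Ω → ℝ) (hW_meas : ∀ i, Measurable (W i))
    (hW_nonneg : ∀ i x, 0 ≤ W i x)
    (hW_indep : iIndepFun W μ)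
    (hW_ident : ∀ i, IdentDistrib (W i) (W 0) μ μ)
    (hW_infinite_mean : ∫⁻ x, ENNReal.ofReal (W 0 x) ∂μ = ⊤)
    (c : ℕ → ℝ) (hc_pos : ∀ n, 0 < c n)
    (m : ℝ)
    (hc_ratio : Tendsto (fun n => c (n + 1) / c n) atTop (nhds m))
    (a b : ℝ) (ha : 1 < a) (hb : 1 < b) (hbm : b < m) :
    Tendsto
      (fun n => Real.exp ((b ^ n - 1) / c n) *
        (μ {x | ∑ i ∈ Finset.range ⌊a ^ n⌋₊, W i x ≤ a ^ n}).toReal)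
      atTop (nhds 0) := by
  have hexponent : Tendsto (fun n => (b ^ n - 1) / c n) atTop (𝓝 0) :=
    squeeze_zero (fun n => div_nonneg (sub_nonneg.2 (one_le_pow₀ hb.le)) (hc_pos n).le)
      (fun n => div_le_div_of_nonneg_right (sub_le_self _ zero_le_one) (hc_pos n).le)
      (tendsto_pow_div_of_tendsto_ratio hc_pos hc_ratio (zero_lt_one.trans hb) hbm)
  have hexp : Tendsto (fun n => Real.exp ((b ^ n - 1) / c n)) atTop (𝓝 1) := by
    simpa [Function.comp_def] using (Real.continuous_exp.tendsto 0).comp hexponent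
  have hsum := tendsto_measure_sum_le_mul_of_lintegral_eq_top hW_meas (hW_nonneg 0)
    (fun i j hij => hW_indep.indepFun hij) hW_ident hW_infinite_mean 2
  have hfloor : Tendsto (fun n => ⌊a ^ n⌋₊) atTop atTop :=
    tendsto_nat_floor_atTop.comp (tendsto_pow_atTop_atTop_of_one_lt ha)
  have hprob : Tendsto (fun n => μ {x | ∑ i ∈ Finset.range ⌊a ^ n⌋₊, W i x ≤ a ^ n})
      atTop (𝓝 0) := by
    refine tendsto_of_tendsto_of_tendsto_of_le_of_le tendsto_const_nhds (hsum.comp hfloor)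
      (fun _ => zero_le) fun n => measure_mono fun x hx => ?_
    have := Nat.div_two_lt_floor (one_le_pow₀ ha.le : 1 ≤ a ^ n)
    simp only [mem_ofPred_eq] at hx ⊢
    linarith
  simpa using hexp.mul ((ENNReal.tendsto_toReal_zero_iff fun _ => measure_ne_top _ _).2 hprob)

/-- Let `(W i)` be i.i.d. nonnegative random variables with `E[W 0] = ∞`, let `(c n)` be
positive reals with `c (n+1) / c n → m` for some `m > 1`, and let `1 < a` and `1 < b < m`.
Then `d n := e^{(b^n - 1)/c n} · P(Σ_{i < ⌊a^n⌋} W i ≤ a^n)` tends to `0` as `n → ∞`. -/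
theorem exp_mul_prob_sum_le_tendsto_zero
    {Ω : Type*} [MeasurableSpace Ω] (μ : Measure Ω) [IsProbabilityMeasure μ]
    (W : ℕ → Ω → ℝ) (hW_meas : ∀ i, Measurable (W i))
    (hW_nonneg : ∀ i x, 0 ≤ W i x)
    (hW_indep : iIndepFun W μ)
    (hW_ident : ∀ i, IdentDistrib (W i) (W 0) μ μ)
    (hW_infinite_mean : ∫⁻ x, ENNReal.ofReal (W 0 x) ∂μ = ⊤)
    (c : ℕ → ℝ) (hc_pos : ∀ n, 0 < c n)
    (m : ℝ) (hm : 1 < m)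
    (hc_ratio : Tendsto (fun n => c (n + 1) / c n) atTop (nhds m))
    (a b : ℝ) (ha : 1 < a) (hb : 1 < b) (hbm : b < m) :
    Tendsto
      (fun n => Real.exp ((b ^ n - 1) / c n) *
        (μ {x | ∑ i ∈ Finset.range ⌊a ^ n⌋₊, W i x ≤ a ^ n}).toReal)
      atTop (nhds 0) :=
  exp_mul_prob_sum_le_tendsto_zero_general μ W hW_meas hW_nonneg hW_indep hW_ident hW_infinite_mean
    c hc_pos m hc_ratio a b ha hb hbm
end
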